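/- arXiv:1801.08803 — 7 statements merged into one kernel-verified Lean document; each statement's English description precedes it below -/
import Mathlib

section
/- The vector field X satisfies X ∘ T₂ = T₂ ∘ X, the flow satisfies φ(t, T₂(v)) = T₂(φ(t,v)) for all t ∈ ℝ and v ∈ ℝ³, and consequently f ∘ T₂ = T₂ ∘ f, where f = T₁ ∘ φ₁. -/
noncomputable section

open Set Filter Topology

/-- `T₁(x,y,z) = (x/2, 2y, 2z)`. -/
def T1 : ℝ × ℝ × ℝ → ℝ × ℝ × ℝ := fun v => (v.1 / 2, 2 * v.2.1, 2 * v.2.2)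

/-- `T₂(x,y,z) = (x/2, y/2, z/2)`. -/
def T2 : ℝ × ℝ × ℝ → ℝ × ℝ × ℝ := fun v => (v.1 / 2, v.2.1 / 2, v.2.2 / 2)

/-- The `n`-th power (`n ∈ ℤ`) of `T₂`: `T₂ⁿ(v) = 2⁻ⁿ • v`. -/
def T2pow (n : ℤ) : ℝ × ℝ × ℝ → ℝ × ℝ × ℝ := fun v => ((2 : ℝ) ^ (-n)) • v

/-- The closed (Euclidean) ball `B` of radius `r` centered at `(3/2, 0, 0)`. -/
def Bset (r : ℝ) : Set (ℝ × ℝ × ℝ) :=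
  {v | (v.1 - 3 / 2) ^ 2 + v.2.1 ^ 2 + v.2.2 ^ 2 ≤ r ^ 2}

/-- `B_n = T₂ⁿ(B)` for `n ∈ ℤ`. -/
def Bn (r : ℝ) (n : ℤ) : Set (ℝ × ℝ × ℝ) := T2pow n '' Bset r

/-- The continuum `E`: the union of the segment `[3/2 - r/2, 3/2 + r/2] × {0} × {0}`,
the segment `{3/2 - r/2} × [0, r/2] × {0}`, and the segments
`{3/2 - r/2 + r/k} × [0, r/2] × {0}` for integers `k ≥ 1`. -/
def Eset (r : ℝ) : Set (ℝ × ℝ × ℝ) :=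
  {v | v.1 ∈ Icc (3 / 2 - r / 2) (3 / 2 + r / 2) ∧ v.2.1 = 0 ∧ v.2.2 = 0} ∪
  {v | v.1 = 3 / 2 - r / 2 ∧ v.2.1 ∈ Icc 0 (r / 2) ∧ v.2.2 = 0} ∪
  {v | ∃ k : ℕ, 1 ≤ k ∧ v.1 = 3 / 2 - r / 2 + r / (k : ℝ) ∧ v.2.1 ∈ Icc 0 (r / 2) ∧ v.2.2 = 0}

/-- `E_k = T₂ᵏ(E)` for `k ∈ ℤ`. -/
def Ek (r : ℝ) (k : ℤ) : Set (ℝ × ℝ × ℝ) := T2pow k '' Eset r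

/-- `W̃ = ⋃_{k ∈ ℤ} E_k ∪ {(x,0,0) : x ∈ ℝ}`. -/
def Wtilde (r : ℝ) : Set (ℝ × ℝ × ℝ) :=
  (⋃ k : ℤ, Ek r k) ∪ {v | v.2.1 = 0 ∧ v.2.2 = 0}

/-- The (global) stable set `W^s_f(a) = {b : ‖fⁿ(a) - fⁿ(b)‖ → 0 as n → +∞}`. -/
def Ws (f : ℝ × ℝ × ℝ → ℝ × ℝ × ℝ) (a : ℝ × ℝ × ℝ) : Set (ℝ × ℝ × ℝ) :=
  {b | Tendsto (fun n : ℕ => ‖f^[n] a - f^[n] b‖) atTop (𝓝 0)}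
lemma my_two_zpow_pos (n : ℤ) : (0:ℝ) < (2:ℝ) ^ n := zpow_pos (by norm_num) n

lemma my_zpow_mul_cancel (n : ℤ) : (2:ℝ) ^ n * (2:ℝ) ^ (-n) = 1 := by
  rw [← zpow_add₀ (by norm_num : (2:ℝ) ≠ 0)]; simp

lemma my_mem_Bn_iff {r : ℝ} {n : ℤ} {v : ℝ × ℝ × ℝ} :
    v ∈ Bn r n ↔ ((2:ℝ) ^ n) • v ∈ Bset r := by
  constructor
  · rintro ⟨u, hu, rfl⟩
    show ((2:ℝ)^n) • ((2:ℝ)^(-n)) • u ∈ Bset r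
    rwa [smul_smul, my_zpow_mul_cancel, one_smul]
  · intro h
    refine ⟨((2:ℝ)^n) • v, h, ?_⟩
    show ((2:ℝ)^(-n)) • ((2:ℝ)^n) • v = v
    rw [smul_smul, mul_comm, my_zpow_mul_cancel, one_smul]

lemma my_x_range {r : ℝ} (hr : r ∈ Ioo (0:ℝ) (1/2)) {n : ℤ} {v : ℝ × ℝ × ℝ}
    (h : v ∈ Bn r n) : 1 < (2:ℝ)^n * v.1 ∧ (2:ℝ)^n * v.1 < 2 := by
  rw [my_mem_Bn_iff] at h
  have h' : ((2:ℝ)^n * v.1 - 3/2)^2 + ((2:ℝ)^n * v.2.1)^2 + ((2:ℝ)^n * v.2.2)^2 ≤ r^2 := by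
    simpa [Bset, Prod.smul_fst, Prod.smul_snd, smul_eq_mul] using h
  obtain ⟨hr0, hr2⟩ := hr
  constructor <;>
    nlinarith [sq_nonneg ((2:ℝ)^n * v.2.1), sq_nonneg ((2:ℝ)^n * v.2.2),
      sq_nonneg ((2:ℝ)^n * v.1 - 3/2)]

lemma my_unique_n {r : ℝ} (hr : r ∈ Ioo (0:ℝ) (1/2)) {n m : ℤ} {v w : ℝ × ℝ × ℝ}
    (hvw : v.1 = w.1) (hv : v ∈ Bn r n) (hw : w ∈ Bn r m) : n = m := by
  obtain ⟨h1, h2⟩ := my_x_range hr hv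
  obtain ⟨h3, h4⟩ := my_x_range hr hw
  rw [hvw] at h1 h2
  have hx : 0 < w.1 := by nlinarith [my_two_zpow_pos n]
  have hnm : (2:ℝ)^n < (2:ℝ)^(m+1) := by
    rw [zpow_add₀ (by norm_num : (2:ℝ) ≠ 0), zpow_one]
    nlinarith [my_two_zpow_pos n, my_two_zpow_pos m]
  have hmn : (2:ℝ)^m < (2:ℝ)^(n+1) := by
    rw [zpow_add₀ (by norm_num : (2:ℝ) ≠ 0), zpow_one]
    nlinarith [my_two_zpow_pos n, my_two_zpow_pos m]
  have h5 : n < m + 1 := (zpow_lt_zpow_iff_right₀ (by norm_num : (1:ℝ) < 2)).mp hnm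
  have h6 : m < n + 1 := (zpow_lt_zpow_iff_right₀ (by norm_num : (1:ℝ) < 2)).mp hmn
  omega

lemma my_hasDerivAt_fst {α β : Type*} [NormedAddCommGroup α] [NormedSpace ℝ α]
    [NormedAddCommGroup β] [NormedSpace ℝ β] {f : ℝ → α × β} {f' : α × β} {x : ℝ}
    (h : HasDerivAt f f' x) : HasDerivAt (fun t => (f t).1) f'.1 x := by
  simpa [Function.comp_def] using (ContinuousLinearMap.fst ℝ α β).hasFDerivAt.comp_hasDerivAt x h

lemma my_hasDerivAt_snd {α β : Type*} [NormedAddCommGroup α] [NormedSpace ℝ α]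
    [NormedAddCommGroup β] [NormedSpace ℝ β] {f : ℝ → α × β} {f' : α × β} {x : ℝ}
    (h : HasDerivAt f f' x) : HasDerivAt (fun t => (f t).2) f'.2 x := by
  simpa [Function.comp_def] using (ContinuousLinearMap.snd ℝ α β).hasFDerivAt.comp_hasDerivAt x h

lemma my_T2_eq_smul (w : ℝ × ℝ × ℝ) : T2 w = (1/2 : ℝ) • w := by
  rw [Prod.ext_iff, Prod.ext_iff]
  refine ⟨?_, ?_, ?_⟩ <;> simp [T2, smul_eq_mul] <;> ring
/-- `X ∘ T₂ = T₂ ∘ X`, the flow satisfies `φ(t, T₂ v) = T₂(φ(t, v))`, and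
consequently `f ∘ T₂ = T₂ ∘ f` where `f = T₁ ∘ φ₁`. -/
theorem stmt_8 (r : ℝ) (hr : r ∈ Ioo (0 : ℝ) (1 / 2))
    (ρ : ℝ × ℝ × ℝ → ℝ) (hρs : ContDiff ℝ (⊤ : ℕ∞) ρ) (hρ01 : ∀ v, ρ v ∈ Icc (0 : ℝ) 1)
    (hρE : ρ ⁻¹' {1} = Eset r) (hρ0 : ∀ v ∉ interior (Bset r), ρ v = 0)
    (X : ℝ × ℝ × ℝ → ℝ × ℝ × ℝ)
    (hX : ∀ n : ℤ, ∀ v ∈ Bn r n, X v = (0, -(ρ (T2pow (-n) v) * v.2.1 * Real.log 4), 0))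
    (hX0 : ∀ v : ℝ × ℝ × ℝ, (∀ n : ℤ, v ∉ Bn r n) → X v = 0)
    (φ : ℝ → ℝ × ℝ × ℝ → ℝ × ℝ × ℝ)
    (hφ0 : ∀ v, φ 0 v = v)
    (hφd : ∀ (v : ℝ × ℝ × ℝ) (t : ℝ), HasDerivAt (fun s => φ s v) (X (φ t v)) t) :
    (∀ v : ℝ × ℝ × ℝ, X (T2 v) = T2 (X v)) ∧
    (∀ (t : ℝ) (v : ℝ × ℝ × ℝ), φ t (T2 v) = T2 (φ t v)) ∧
    (∀ v : ℝ × ℝ × ℝ, T1 (φ 1 (T2 v)) = T2 (T1 (φ 1 v))) := by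
  -- Part 1
  have part1 : ∀ v : ℝ × ℝ × ℝ, X (T2 v) = T2 (X v) := by
    intro v
    by_cases h : ∃ n : ℤ, v ∈ Bn r n
    · obtain ⟨n, hn⟩ := h
      have hT2v : T2 v ∈ Bn r (n + 1) := by
        rw [my_mem_Bn_iff, my_T2_eq_smul, smul_smul]
        have he : (2:ℝ)^(n+1) * (1/2) = (2:ℝ)^n := by
          rw [zpow_add₀ (by norm_num : (2:ℝ) ≠ 0), zpow_one]; ring
        rw [he]
        exact my_mem_Bn_iff.mp hn
      have harg : T2pow (-(n+1)) (T2 v) = T2pow (-n) v := by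
        show ((2:ℝ)^(-(-(n+1)))) • T2 v = ((2:ℝ)^(-(-n))) • v
        rw [neg_neg, neg_neg, my_T2_eq_smul, smul_smul]
        congr 1
        rw [zpow_add₀ (by norm_num : (2:ℝ) ≠ 0), zpow_one]; ring
      rw [hX (n+1) _ hT2v, hX n v hn, harg]
      simp only [T2, Prod.mk.injEq]
      refine ⟨by norm_num, by ring, by norm_num⟩
    · push_neg at h
      have h2 : ∀ m : ℤ, T2 v ∉ Bn r m := by
        intro m hm
        apply h (m - 1)
        rw [my_mem_Bn_iff] at hm ⊢
        rw [my_T2_eq_smul, smul_smul] at hm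
        have he : (2:ℝ)^m * (1/2) = (2:ℝ)^(m-1) := by
          rw [show m = (m-1) + 1 by ring, zpow_add₀ (by norm_num : (2:ℝ) ≠ 0), zpow_one]
          ring_nf
        rwa [he] at hm
      rw [hX0 _ h2, hX0 v h]
      rw [Prod.ext_iff, Prod.ext_iff]
      refine ⟨?_, ?_, ?_⟩ <;> simp [T2]
  -- components of X vanish
  have hX1 : ∀ w : ℝ × ℝ × ℝ, (X w).1 = 0 := by
    intro w
    by_cases h : ∃ k : ℤ, w ∈ Bn r k
    · obtain ⟨k, hk⟩ := h; rw [hX k w hk]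
    · push_neg at h; rw [hX0 w h]; rfl
  have hX3 : ∀ w : ℝ × ℝ × ℝ, (X w).2.2 = 0 := by
    intro w
    by_cases h : ∃ k : ℤ, w ∈ Bn r k
    · obtain ⟨k, hk⟩ := h; rw [hX k w hk]
    · push_neg at h; rw [hX0 w h]; rfl
  -- first and third coordinates are constant along the flow
  have hconst : ∀ (u : ℝ × ℝ × ℝ) (s : ℝ), (φ s u).1 = u.1 ∧ (φ s u).2.2 = u.2.2 := by
    intro u s
    constructor
    · have hd : ∀ τ : ℝ, HasDerivAt (fun σ => (φ σ u).1) 0 τ := by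
        intro τ
        have := my_hasDerivAt_fst (hφd u τ)
        rwa [hX1] at this
      have := is_const_of_deriv_eq_zero (𝕜 := ℝ) (fun τ => (hd τ).differentiableAt)
        (fun τ => (hd τ).deriv) s 0
      simpa [hφ0] using this
    · have hd : ∀ τ : ℝ, HasDerivAt (fun σ => (φ σ u).2.2) 0 τ := by
        intro τ
        have := my_hasDerivAt_snd (my_hasDerivAt_snd (hφd u τ))
        rwa [hX3] at this
      have := is_const_of_deriv_eq_zero (𝕜 := ℝ) (fun τ => (hd τ).differentiableAt)
        (fun τ => (hd τ).deriv) s 0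
      simpa [hφ0] using this
  -- Part 2
  have part2 : ∀ (t : ℝ) (v : ℝ × ℝ × ℝ), φ t (T2 v) = T2 (φ t v) := by
    intro t v
    -- key: there is an n such that on the line {w.1 = v.1/2, w.2.2 = v.2.2/2}
    -- the field X coincides with an autonomous Lipschitz field depending only on w.2.1
    have common : ∀ n : ℤ,
        (∀ w : ℝ × ℝ × ℝ, w.1 = v.1 / 2 → w ∉ Bn r n → ∀ k : ℤ, w ∉ Bn r k) →
        ∀ w : ℝ × ℝ × ℝ, w.1 = v.1 / 2 → w.2.2 = v.2.2 / 2 →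
          X w = ((0:ℝ),
            -(ρ (((2:ℝ)^n) • ((v.1/2 : ℝ), w.2.1, (v.2.2/2 : ℝ))) * w.2.1 * Real.log 4),
            (0:ℝ)) := by
      intro n hline w hw1 hw2
      have hw : w = ((v.1/2 : ℝ), w.2.1, (v.2.2/2 : ℝ)) := by
        rw [Prod.ext_iff, Prod.ext_iff]
        exact ⟨hw1, rfl, hw2⟩
      by_cases hwB : w ∈ Bn r n
      · rw [hX n w hwB]
        have harg : T2pow (-n) w = ((2:ℝ)^n) • ((v.1/2 : ℝ), w.2.1, (v.2.2/2 : ℝ)) := by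
          show ((2:ℝ)^(-(-n))) • w = _
          rw [neg_neg, ← hw]
        rw [harg]
      · have hnot : ∀ k : ℤ, w ∉ Bn r k := hline w hw1 hwB
        rw [hX0 w hnot]
        have hρz : ρ (((2:ℝ)^n) • ((v.1/2 : ℝ), w.2.1, (v.2.2/2 : ℝ))) = 0 := by
          apply hρ0
          intro hmem
          apply hwB
          rw [my_mem_Bn_iff, ← hw] at *
          exact interior_subset (by rwa [hw])
        rw [hρz]
        norm_num [Prod.ext_iff]
    obtain ⟨n, hkey⟩ : ∃ n : ℤ, ∀ w : ℝ × ℝ × ℝ, w.1 = v.1 / 2 → w.2.2 = v.2.2 / 2 →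
        X w = ((0:ℝ),
          -(ρ (((2:ℝ)^n) • ((v.1/2 : ℝ), w.2.1, (v.2.2/2 : ℝ))) * w.2.1 * Real.log 4),
          (0:ℝ)) := by
      by_cases hex : ∃ (m : ℤ) (u : ℝ × ℝ × ℝ), u.1 = v.1 / 2 ∧ u ∈ Bn r m
      · obtain ⟨m, u, hu1, huB⟩ := hex
        refine ⟨m, common m ?_⟩
        intro w hw1 hwB k hk
        have : k = m := my_unique_n hr (by rw [hw1, ← hu1]) hk huB
        exact hwB (this ▸ hk)
      · push_neg at hex
        refine ⟨0, common 0 ?_⟩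
        intro w hw1 _ k hk
        exact hex k w hw1 hk
    -- the autonomous scalar field
    set G : ℝ → ℝ := fun y =>
      -(ρ (((2:ℝ)^n) • ((v.1/2 : ℝ), y, (v.2.2/2 : ℝ))) * y * Real.log 4) with hGdef
    have hGsmooth : ContDiff ℝ (⊤ : ℕ∞) G := by
      apply ContDiff.neg
      apply ContDiff.mul _ contDiff_const
      apply ContDiff.mul _ contDiff_id
      exact hρs.comp ((contDiff_const.prodMk (contDiff_id.prodMk contDiff_const)).const_smul _)
    have hGsupp : HasCompactSupport G := by
      apply HasCompactSupport.intro (isCompact_Icc (a := -((2:ℝ)^(-n) * r)) (b := (2:ℝ)^(-n) * r))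
      intro y hy
      have hρz : ρ (((2:ℝ)^n) • ((v.1/2 : ℝ), y, (v.2.2/2 : ℝ))) = 0 := by
        apply hρ0
        intro hmem
        have hB := interior_subset hmem
        have hsq : ((2:ℝ)^n * y)^2 ≤ r^2 := by
          have hB' : ((2:ℝ)^n * (v.1/2) - 3/2)^2 + ((2:ℝ)^n * y)^2
              + ((2:ℝ)^n * (v.2.2/2))^2 ≤ r^2 := by
            simpa [Bset, Prod.smul_fst, Prod.smul_snd, smul_eq_mul] using hB
          nlinarith [sq_nonneg ((2:ℝ)^n * (v.1/2) - 3/2), sq_nonneg ((2:ℝ)^n * (v.2.2/2))]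
        simp only [mem_Icc, not_and_or, not_le] at hy
        have hp := my_two_zpow_pos n
        have hq := my_two_zpow_pos (-n)
        have hc : (2:ℝ)^n * ((2:ℝ)^(-n) * r) = r := by
          rw [← mul_assoc, my_zpow_mul_cancel, one_mul]
        obtain ⟨hr0, hr2⟩ := hr
        rcases hy with h | h
        · have h' : (2:ℝ)^n * y < -r := by
            have h2 := mul_lt_mul_of_pos_left h hp
            rw [mul_neg, hc] at h2
            exact h2
          nlinarith [mul_pos (show (0:ℝ) < r - (2:ℝ)^n * y by linarith)
            (show (0:ℝ) < -r - (2:ℝ)^n * y by linarith)]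
        · have h' : r < (2:ℝ)^n * y := by
            have h2 := mul_lt_mul_of_pos_left h hp
            rw [hc] at h2
            exact h2
          nlinarith [mul_pos (show (0:ℝ) < (2:ℝ)^n * y - r by linarith)
            (show (0:ℝ) < (2:ℝ)^n * y + r by linarith)]
      simp only [hGdef, hρz]
      ring
    obtain ⟨K, hK⟩ := hGsmooth.lipschitzWith_of_hasCompactSupport hGsupp (by simp)
    set Y : ℝ × ℝ × ℝ → ℝ × ℝ × ℝ := fun w => ((0:ℝ), G w.2.1, (0:ℝ)) with hYdef
    have hYlip : LipschitzWith (max 0 (max (K * (1 * 1)) 0)) Y :=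
      (LipschitzWith.const _).prodMk
        ((hK.comp (LipschitzWith.prod_fst.comp LipschitzWith.prod_snd)).prodMk
          (LipschitzWith.const _))
    -- the two candidate solutions
    have hc1L : ∀ s : ℝ, (φ s (T2 v)).1 = v.1 / 2 ∧ (φ s (T2 v)).2.2 = v.2.2 / 2 := by
      intro s
      have h := hconst (T2 v) s
      exact ⟨h.1, h.2⟩
    have hc2L : ∀ s : ℝ, (T2 (φ s v)).1 = v.1 / 2 ∧ (T2 (φ s v)).2.2 = v.2.2 / 2 := by
      intro s
      have h := hconst v s
      constructor
      · show (φ s v).1 / 2 = v.1 / 2; rw [h.1]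
      · show (φ s v).2.2 / 2 = v.2.2 / 2; rw [h.2]
    have hd1 : ∀ s : ℝ, HasDerivAt (fun τ => φ τ (T2 v)) (Y (φ s (T2 v))) s := by
      intro s
      have h := hφd (T2 v) s
      have e : X (φ s (T2 v)) = Y (φ s (T2 v)) := hkey _ (hc1L s).1 (hc1L s).2
      rwa [e] at h
    have hd2 : ∀ s : ℝ, HasDerivAt (fun τ => T2 (φ τ v)) (Y (T2 (φ s v))) s := by
      intro s
      have h : HasDerivAt (fun τ => (1/2 : ℝ) • φ τ v) ((1/2 : ℝ) • X (φ s v)) s :=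
        (hφd v s).const_smul ((1/2 : ℝ))
      have e1 : (fun τ => (1/2 : ℝ) • φ τ v) = fun τ => T2 (φ τ v) := by
        funext τ; rw [my_T2_eq_smul]
      have e2 : (1/2 : ℝ) • X (φ s v) = Y (T2 (φ s v)) := by
        rw [← my_T2_eq_smul, ← part1]
        exact hkey _ (hc2L s).1 (hc2L s).2
      rw [e1, e2] at h
      exact h
    -- uniqueness
    have h0 : (fun τ => φ τ (T2 v)) 0 = (fun τ => T2 (φ τ v)) 0 := by
      simp [hφ0]
    have huniq := ODE_solution_unique_of_mem_Ioo
      (v := fun _ : ℝ => Y) (s := fun _ : ℝ => (univ : Set (ℝ × ℝ × ℝ)))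
      (K := max 0 (max (K * (1 * 1)) 0))
      (t₀ := 0) (a := -(|t| + 1)) (b := |t| + 1)
      (fun _ _ => hYlip.lipschitzOnWith)
      (by constructor <;> linarith [abs_nonneg t])
      (fun τ _ => ⟨hd1 τ, mem_univ _⟩)
      (fun τ _ => ⟨hd2 τ, mem_univ _⟩)
      h0
    have ht : t ∈ Ioo (-(|t| + 1)) (|t| + 1) := by
      constructor
      · have := neg_abs_le t; linarith
      · have := le_abs_self t; linarith
    exact huniq ht
  refine ⟨part1, part2, ?_⟩
  intro v
  rw [part2 1 v]
  rw [Prod.ext_iff, Prod.ext_iff]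
  refine ⟨?_, ?_, ?_⟩ <;> simp [T1, T2] <;> ring
end
end

section
/- For every integer n ≥ 0, (T₂⁻¹ ∘ f)ⁿ = T₂⁻ⁿ ∘ fⁿ as maps of ℝ³; equivalently, for every v ∈ ℝ³, (T₂⁻¹ ∘ f)ⁿ(v) = 2ⁿ · fⁿ(v). -/
noncomputable section

open Set Filter Topology

set_option maxHeartbeats 2000000 in
/-- For every `n ≥ 0`, `(T₂⁻¹ ∘ f)ⁿ = T₂⁻ⁿ ∘ fⁿ`; equivalently
`(T₂⁻¹ ∘ f)ⁿ(v) = 2ⁿ • fⁿ(v)` for every `v`, where `f = T₁ ∘ φ₁`. -/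
theorem stmt_9 (r : ℝ) (hr : r ∈ Ioo (0 : ℝ) (1 / 2))
    (ρ : ℝ × ℝ × ℝ → ℝ) (hρs : ContDiff ℝ (⊤ : ℕ∞) ρ) (hρ01 : ∀ v, ρ v ∈ Icc (0 : ℝ) 1)
    (hρE : ρ ⁻¹' {1} = Eset r) (hρ0 : ∀ v ∉ interior (Bset r), ρ v = 0)
    (X : ℝ × ℝ × ℝ → ℝ × ℝ × ℝ)
    (hX : ∀ n : ℤ, ∀ v ∈ Bn r n, X v = (0, -(ρ (T2pow (-n) v) * v.2.1 * Real.log 4), 0))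
    (hX0 : ∀ v : ℝ × ℝ × ℝ, (∀ n : ℤ, v ∉ Bn r n) → X v = 0)
    (φ : ℝ → ℝ × ℝ × ℝ → ℝ × ℝ × ℝ)
    (hφ0 : ∀ v, φ 0 v = v)
    (hφd : ∀ (v : ℝ × ℝ × ℝ) (t : ℝ), HasDerivAt (fun s => φ s v) (X (φ t v)) t) :
    ∀ (n : ℕ) (v : ℝ × ℝ × ℝ),
      (fun w => T2pow (-1) (T1 (φ 1 w)))^[n] v
          = T2pow (-(n : ℤ)) ((fun w => T1 (φ 1 w))^[n] v) ∧
      (fun w => T2pow (-1) (T1 (φ 1 w)))^[n] v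
          = ((2 : ℝ) ^ n) • ((fun w => T1 (φ 1 w))^[n] v) := by

  obtain ⟨hr0, hr2⟩ := hr
  have L0 : (0:ℝ) < Real.log 4 := Real.log_pos (by norm_num)
  set L := Real.log 4 with hLdef
  -- membership in the rescaled balls
  have memBn : ∀ (n : ℤ) (v : ℝ × ℝ × ℝ), v ∈ Bn r n ↔ (2:ℝ)^n • v ∈ Bset r := by
    intro n v
    have h2 : ((2:ℝ)^n) ≠ 0 := by positivity
    constructor
    · rintro ⟨b, hb, rfl⟩
      simpa [T2pow, smul_smul, zpow_neg, mul_inv_cancel₀ h2] using hb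
    · intro h
      exact ⟨(2:ℝ)^n • v, h, by simp [T2pow, smul_smul, zpow_neg, inv_mul_cancel₀ h2]⟩
  have hT2pow : ∀ (n : ℤ) (w : ℝ × ℝ × ℝ), T2pow (-n) w = (2:ℝ)^n • w := by
    intro n w; simp [T2pow]
  -- equivariance of X under dyadic scalings
  have hXeq : ∀ (m : ℤ) (v : ℝ × ℝ × ℝ), X ((2:ℝ)^m • v) = (2:ℝ)^m • X v := by
    intro m v
    by_cases h : ∃ n, v ∈ Bn r n
    · obtain ⟨n, hn⟩ := h
      have hn' : (2:ℝ)^m • v ∈ Bn r (n - m) := by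
        rw [memBn] at hn ⊢
        rw [smul_smul, ← zpow_add₀ (two_ne_zero), sub_add_cancel]
        exact hn
      rw [hX n v hn, hX (n - m) _ hn', hT2pow, hT2pow, smul_smul,
        ← zpow_add₀ (two_ne_zero), sub_add_cancel]
      have h21 : ((2:ℝ)^m • v).2.1 = (2:ℝ)^m * v.2.1 := rfl
      rw [h21]
      simp only [Prod.smul_def, smul_eq_mul, Prod.mk.injEq]
      refine ⟨by ring, by ring, by ring⟩
    · push_neg at h
      have h' : ∀ k : ℤ, (2:ℝ)^m • v ∉ Bn r k := by
        intro k hk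
        rw [memBn] at hk
        apply h (k + m)
        rw [memBn, zpow_add₀ (two_ne_zero), mul_smul]
        exact hk
      rw [hX0 _ h', hX0 v h, smul_zero]
  -- ρ is Lipschitz
  have hBclosed : IsClosed (Bset r) := isClosed_le (by fun_prop) continuous_const
  have hBcomp : IsCompact (Bset r) := by
    apply (isCompact_closedBall (0:ℝ×ℝ×ℝ) 2).of_isClosed_subset hBclosed
    intro v hv
    simp only [Bset, mem_setOf_eq] at hv
    rw [Metric.mem_closedBall, dist_zero_right, Prod.norm_def, Prod.norm_def]
    simp only [Real.norm_eq_abs]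
    refine max_le ?_ (max_le ?_ ?_) <;> rw [abs_le] <;> constructor <;>
      nlinarith [sq_nonneg v.2.1, sq_nonneg v.2.2, sq_nonneg (v.1 - 3/2)]
  have hρout : ∀ a ∉ Bset r, ρ a = 0 := fun a ha => hρ0 a (fun hi => ha (interior_subset hi))
  have hsupp : HasCompactSupport ρ := by
    apply HasCompactSupport.intro hBcomp
    exact hρout
  obtain ⟨K₀, hK₀⟩ := ContDiff.lipschitzWith_of_hasCompactSupport hsupp hρs (by simp)
  have hρabs : ∀ a, |ρ a| ≤ 1 := by
    intro a
    have h1 := (hρ01 a).1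
    have h2 := (hρ01 a).2
    rw [abs_le]; exact ⟨by linarith, h2⟩
  have hymem : ∀ u ∈ Bset r, |u.2.1| ≤ 1 := by
    intro u hu
    simp only [Bset, mem_setOf_eq] at hu
    rw [abs_le]; constructor <;>
      nlinarith [sq_nonneg u.2.2, sq_nonneg (u.1 - 3/2)]
  -- the auxiliary scalar functions ψ n
  set ψ : ℤ → (ℝ × ℝ × ℝ) → ℝ := fun n u => ρ ((2:ℝ)^n • u) * u.2.1 with hψdef
  have hψlip : ∀ (n : ℤ) (u u' : ℝ × ℝ × ℝ),
      |ψ n u - ψ n u'| ≤ (1 + (K₀:ℝ)) * ‖u - u'‖ := by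
    intro n u u'
    have h2pos : (0:ℝ) < (2:ℝ)^n := by positivity
    have hnn : (0:ℝ) ≤ ‖u - u'‖ := norm_nonneg _
    have hK0 : (0:ℝ) ≤ (K₀:ℝ) := K₀.coe_nonneg
    have hnormsmul : ‖(2:ℝ)^n • u - (2:ℝ)^n • u'‖ = (2:ℝ)^n * ‖u - u'‖ := by
      rw [← smul_sub, norm_smul, Real.norm_eq_abs, abs_of_pos h2pos]
    have hy : |u.2.1 - u'.2.1| ≤ ‖u - u'‖ := by
      have e1 : u.2.1 - u'.2.1 = (u - u').2.1 := rfl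
      rw [e1, ← Real.norm_eq_abs]
      exact le_trans (norm_fst_le (u - u').2) (norm_snd_le (u - u'))
    have hρd : |ρ ((2:ℝ)^n • u) - ρ ((2:ℝ)^n • u')| ≤ (K₀:ℝ) * ((2:ℝ)^n * ‖u - u'‖) := by
      have := hK₀.dist_le_mul ((2:ℝ)^n • u) ((2:ℝ)^n • u')
      rwa [Real.dist_eq, dist_eq_norm, hnormsmul] at this
    by_cases hb : ρ ((2:ℝ)^n • u') = 0
    · by_cases ha : ρ ((2:ℝ)^n • u) = 0
      · have e : ψ n u - ψ n u' = 0 := by simp [hψdef, ha, hb]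
        rw [e, abs_zero]; positivity
      · have hmem : ((2:ℝ)^n • u) ∈ Bset r := by
          by_contra hc; exact ha (hρout _ hc)
        have hy1 : (2:ℝ)^n * |u.2.1| ≤ 1 := by
          have := hymem _ hmem
          rwa [show ((2:ℝ)^n • u).2.1 = (2:ℝ)^n * u.2.1 from rfl, abs_mul,
            abs_of_pos h2pos] at this
        have e : ψ n u - ψ n u' = (ρ ((2:ℝ)^n • u) - ρ ((2:ℝ)^n • u')) * u.2.1 := by
          simp only [hψdef, hb]; ring
        rw [e, abs_mul]
        calc |ρ ((2:ℝ)^n • u) - ρ ((2:ℝ)^n • u')| * |u.2.1|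
            ≤ ((K₀:ℝ) * ((2:ℝ)^n * ‖u - u'‖)) * |u.2.1| :=
              mul_le_mul_of_nonneg_right hρd (abs_nonneg _)
          _ = ((K₀:ℝ) * ‖u - u'‖) * ((2:ℝ)^n * |u.2.1|) := by ring
          _ ≤ ((K₀:ℝ) * ‖u - u'‖) * 1 :=
              mul_le_mul_of_nonneg_left hy1 (by positivity)
          _ ≤ (1 + (K₀:ℝ)) * ‖u - u'‖ := by nlinarith
    · have hmem : ((2:ℝ)^n • u') ∈ Bset r := by
        by_contra hc; exact hb (hρout _ hc)
      have hy1 : (2:ℝ)^n * |u'.2.1| ≤ 1 := by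
        have := hymem _ hmem
        rwa [show ((2:ℝ)^n • u').2.1 = (2:ℝ)^n * u'.2.1 from rfl, abs_mul,
          abs_of_pos h2pos] at this
      have e : ψ n u - ψ n u' = ρ ((2:ℝ)^n • u) * (u.2.1 - u'.2.1)
          + (ρ ((2:ℝ)^n • u) - ρ ((2:ℝ)^n • u')) * u'.2.1 := by
        simp only [hψdef]; ring
      rw [e]
      calc |ρ ((2:ℝ)^n • u) * (u.2.1 - u'.2.1)
            + (ρ ((2:ℝ)^n • u) - ρ ((2:ℝ)^n • u')) * u'.2.1|
          ≤ |ρ ((2:ℝ)^n • u)| * |u.2.1 - u'.2.1|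
            + |ρ ((2:ℝ)^n • u) - ρ ((2:ℝ)^n • u')| * |u'.2.1| := by
            refine (abs_add_le _ _).trans ?_
            rw [abs_mul, abs_mul]
        _ ≤ 1 * ‖u - u'‖ + ((K₀:ℝ) * ((2:ℝ)^n * ‖u - u'‖)) * |u'.2.1| := by
            refine add_le_add ?_ (mul_le_mul_of_nonneg_right hρd (abs_nonneg _))
            exact mul_le_mul (hρabs _) hy (abs_nonneg _) zero_le_one
        _ = ‖u - u'‖ + ((K₀:ℝ) * ‖u - u'‖) * ((2:ℝ)^n * |u'.2.1|) := by ring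
        _ ≤ ‖u - u'‖ + ((K₀:ℝ) * ‖u - u'‖) * 1 :=
            (add_le_add_iff_left _).2 (mul_le_mul_of_nonneg_left hy1 (by positivity))
        _ = (1 + (K₀:ℝ)) * ‖u - u'‖ := by ring
  -- vanishing of ψ away from the supporting ball
  have hψ0 : ∀ (n : ℤ) (u : ℝ × ℝ × ℝ), (2:ℝ)^n • u ∉ Bset r → ψ n u = 0 := by
    intro n u hu; simp [hψdef, hρout _ hu]
  have hBx : ∀ w ∈ Bset r, 1 < w.1 ∧ w.1 < 2 := by
    intro w hw
    simp only [Bset, mem_setOf_eq] at hw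
    constructor <;> nlinarith [sq_nonneg w.2.1, sq_nonneg w.2.2, sq_nonneg (w.1 - 3/2)]
  -- description of X via ψ
  have hXpsi : ∀ v : ℝ × ℝ × ℝ,
      (∃ n : ℤ, X v = (0, -(ψ n v * L), 0) ∧ ∀ m : ℤ, m ≠ n → ψ m v = 0) ∨
      (X v = 0 ∧ ∀ m : ℤ, ψ m v = 0) := by
    intro v
    by_cases h : ∃ n, v ∈ Bn r n
    · obtain ⟨n, hn⟩ := h
      left
      refine ⟨n, ?_, ?_⟩
      · rw [hX n v hn, hT2pow]
      · intro m hm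
        apply hψ0
        intro hmem
        have hxn := hBx _ ((memBn n v).1 hn)
        have hxm := hBx _ hmem
        have e : ((2:ℝ)^m • v).1 = (2:ℝ)^(m - n) * ((2:ℝ)^n • v).1 := by
          have : (2:ℝ)^m • v = (2:ℝ)^(m - n) • ((2:ℝ)^n • v) := by
            rw [smul_smul, ← zpow_add₀ (two_ne_zero), sub_add_cancel]
          rw [this]; rfl
        rw [e] at hxm
        set x := ((2:ℝ)^n • v).1 with hx
        have h2pos : (0:ℝ) < (2:ℝ)^(m - n) := by positivity
        rcases lt_or_gt_of_ne (sub_ne_zero.2 hm) with hk | hk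
        · have h1 : m - n ≤ -1 := by omega
          have : (2:ℝ)^(m - n) ≤ (2:ℝ)^(-1 : ℤ) := zpow_le_zpow_right₀ one_le_two h1
          rw [zpow_neg_one] at this
          nlinarith [hxn.1, hxn.2, hxm.1]
        · have h1 : (1:ℤ) ≤ m - n := by omega
          have : (2:ℝ)^(1 : ℤ) ≤ (2:ℝ)^(m - n) := zpow_le_zpow_right₀ one_le_two h1
          rw [zpow_one] at this
          nlinarith [hxn.1, hxn.2, hxm.2]
    · push_neg at h
      right
      refine ⟨hX0 v h, ?_⟩
      intro m
      apply hψ0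
      intro hmem
      exact h m ((memBn m v).2 hmem)
  -- X is Lipschitz
  have hnorm3 : ∀ a b : ℝ, ‖(((0:ℝ), (a, (0:ℝ))) : ℝ×ℝ×ℝ) - (0, (b, 0))‖ = |a - b| := by
    intro a b
    simp [Prod.norm_def, Real.norm_eq_abs, Prod.sub_def, abs_nonneg]
  have hnorm1 : ∀ a : ℝ, ‖(((0:ℝ), (a, (0:ℝ))) : ℝ×ℝ×ℝ)‖ = |a| := by
    intro a
    have := hnorm3 a 0
    simpa using this
  set C : ℝ := 2 * (1 + (K₀:ℝ)) * L with hCdef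
  have hC0 : 0 ≤ C := by positivity
  have hK0 : (0:ℝ) ≤ (K₀:ℝ) := K₀.coe_nonneg
  have hXlipR : ∀ v w : ℝ × ℝ × ℝ, ‖X v - X w‖ ≤ C * ‖v - w‖ := by
    intro v w
    have hnn : (0:ℝ) ≤ ‖v - w‖ := norm_nonneg _
    rcases hXpsi v with ⟨n, hv1, hv2⟩ | ⟨hv1, hv2⟩ <;>
      rcases hXpsi w with ⟨m, hw1, hw2⟩ | ⟨hw1, hw2⟩
    · rw [hv1, hw1, hnorm3]
      have e : -(ψ n v * L) - -(ψ m w * L) = (ψ m w - ψ n v) * L := by ring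
      rw [e, abs_mul, abs_of_pos L0]
      have key : |ψ m w - ψ n v| ≤ 2 * (1 + (K₀:ℝ)) * ‖v - w‖ := by
        by_cases hnm : n = m
        · subst hnm
          have := hψlip n w v
          rw [norm_sub_rev] at this
          nlinarith
        · have h1 : ψ m v = 0 := hv2 m (Ne.symm hnm)
          have h2 : ψ n w = 0 := hw2 n hnm
          have e2 : ψ m w - ψ n v = (ψ m w - ψ m v) + (ψ n w - ψ n v) := by
            rw [h1, h2]; ring
          rw [e2]
          refine (abs_add_le _ _).trans ?_
          have ha := hψlip m w v
          have hb := hψlip n w v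
          rw [norm_sub_rev] at ha hb
          linarith
      nlinarith
    · rw [hv1, hw1, sub_zero, hnorm1]
      have h2 : ψ n w = 0 := hw2 n
      have := hψlip n v w
      rw [h2, sub_zero] at this
      have e : |(-(ψ n v * L))| = |ψ n v| * L := by
        rw [abs_neg, abs_mul, abs_of_pos L0]
      rw [e]
      rw [hCdef]
      nlinarith
    · rw [hv1, hw1, zero_sub, norm_neg, hnorm1]
      have h2 : ψ m v = 0 := hv2 m
      have := hψlip m v w
      rw [h2, zero_sub, abs_neg] at this
      have e : |(-(ψ m w * L))| = |ψ m w| * L := by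
        rw [abs_neg, abs_mul, abs_of_pos L0]
      rw [e, hCdef]
      nlinarith
    · rw [hv1, hw1, sub_self, norm_zero]; positivity
  have hXlip : LipschitzWith (Real.toNNReal C) X := by
    apply LipschitzWith.of_dist_le_mul
    intro x y
    rw [dist_eq_norm, dist_eq_norm, Real.coe_toNNReal _ hC0]
    exact hXlipR x y
  -- the flow commutes with dyadic scalings
  have hcont : ∀ w : ℝ × ℝ × ℝ, Continuous (fun s => φ s w) :=
    fun w => continuous_iff_continuousAt.2 (fun t => (hφd w t).continuousAt)
  have hφeq : ∀ (m : ℤ) (v : ℝ × ℝ × ℝ), φ 1 ((2:ℝ)^m • v) = (2:ℝ)^m • φ 1 v := by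
    intro m v
    have h2 : ((2:ℝ)^m) ≠ 0 := by positivity
    have hcancel : (2:ℝ)^m * (2:ℝ)^(-m) = 1 := by
      rw [← zpow_add₀ (two_ne_zero), add_neg_cancel, zpow_zero]
    have hcancel' : (2:ℝ)^(-m) * (2:ℝ)^m = 1 := by
      rw [← zpow_add₀ (two_ne_zero), neg_add_cancel, zpow_zero]
    have key : EqOn (fun t => (2:ℝ)^(-m) • φ t ((2:ℝ)^m • v)) (fun t => φ t v) (Icc 0 1) := by
      apply ODE_solution_unique (v := fun _ : ℝ => X) (K := Real.toNNReal C)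
        (fun _ => hXlip)
      · exact ((continuous_const (y := (2:ℝ)^(-m))).smul (hcont ((2:ℝ)^m • v))).continuousOn
      · intro t _
        have h := (hφd ((2:ℝ)^m • v) t).const_smul ((2:ℝ)^(-m))
        have e : X ((2:ℝ)^(-m) • φ t ((2:ℝ)^m • v)) = (2:ℝ)^(-m) • X (φ t ((2:ℝ)^m • v)) :=
          hXeq (-m) _
        rw [e]
        exact h.hasDerivWithinAt
      · exact (hcont v).continuousOn
      · intro t _
        exact (hφd v t).hasDerivWithinAt
      · rw [hφ0, hφ0, smul_smul, hcancel', one_smul]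
    have h1 := key (right_mem_Icc.2 zero_le_one)
    simp only at h1
    calc φ 1 ((2:ℝ)^m • v) = ((2:ℝ)^m * (2:ℝ)^(-m)) • φ 1 ((2:ℝ)^m • v) := by
          rw [hcancel, one_smul]
      _ = (2:ℝ)^m • ((2:ℝ)^(-m) • φ 1 ((2:ℝ)^m • v)) := by rw [mul_smul]
      _ = (2:ℝ)^m • φ 1 v := by rw [h1]
  -- T1 is linear over scalars
  have hT1s : ∀ (c : ℝ) (w : ℝ × ℝ × ℝ), T1 (c • w) = c • T1 w := by
    intro c w
    simp only [T1, Prod.smul_def, smul_eq_mul, Prod.mk.injEq]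
    refine ⟨by ring, by ring, by ring⟩
  -- main induction
  have main : ∀ (n : ℕ) (v : ℝ × ℝ × ℝ),
      (fun w => T2pow (-1) (T1 (φ 1 w)))^[n] v
        = ((2:ℝ)^(n:ℤ)) • ((fun w => T1 (φ 1 w))^[n] v) := by
    intro n
    induction n with
    | zero => intro v; simp
    | succ k ih =>
      intro v
      rw [Function.iterate_succ_apply', Function.iterate_succ_apply', ih v]
      show T2pow (-1) (T1 (φ 1 ((2:ℝ)^(k:ℤ) • _))) = _
      rw [hφeq (k:ℤ), hT1s, hT2pow 1, smul_smul, ← zpow_add₀ (two_ne_zero)]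
      norm_num
      rw [add_comm]
  intro n v
  constructor
  · rw [main n v, hT2pow]
  · rw [main n v, zpow_natCast]
end
end

section
/- On the continuum E the flow contracts the second coordinate exactly by factor 4 per unit time: for every (x,y,0) ∈ E and every t ≥ 0, φ(t,(x,y,0)) = (x, 4^{−t}·y, 0). More generally, for every k ∈ ℤ, every point of E_k = T₂ᵏ(E) satisfies φ(t,(x,y,0)) = (x, 4^{−t}·y, 0) for all t ≥ 0. -/
noncomputable section

open Set Filter Topology

private lemma coord_hasDerivAt {f : ℝ → ℝ × ℝ × ℝ} {f' : ℝ × ℝ × ℝ} {t : ℝ}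
    (hf : HasDerivAt f f' t) :
    HasDerivAt (fun s => (f s).1) f'.1 t ∧ HasDerivAt (fun s => (f s).2.1) f'.2.1 t ∧
      HasDerivAt (fun s => (f s).2.2) f'.2.2 t := by
  refine ⟨?_, ?_, ?_⟩
  · exact ((ContinuousLinearMap.fst ℝ ℝ (ℝ × ℝ)).hasFDerivAt.comp_hasDerivAt t hf)
  · exact (((ContinuousLinearMap.fst ℝ ℝ ℝ).comp
      (ContinuousLinearMap.snd ℝ ℝ (ℝ × ℝ))).hasFDerivAt.comp_hasDerivAt t hf)
  · exact (((ContinuousLinearMap.snd ℝ ℝ ℝ).comp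
      (ContinuousLinearMap.snd ℝ ℝ (ℝ × ℝ))).hasFDerivAt.comp_hasDerivAt t hf)

private lemma core_lemma (K : ℝ) (hK : 0 < K)
    (X : ℝ × ℝ × ℝ → ℝ × ℝ × ℝ)
    (L1 : ∀ w, ∃ c, c ∈ Icc (0:ℝ) 1 ∧ X w = (0, -(c * w.2.1 * K), 0))
    (φ : ℝ → ℝ × ℝ × ℝ → ℝ × ℝ × ℝ)
    (hφ0 : ∀ v, φ 0 v = v)
    (hφd : ∀ (v : ℝ × ℝ × ℝ) (t : ℝ), HasDerivAt (fun s => φ s v) (X (φ t v)) t)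
    (v : ℝ × ℝ × ℝ) (hz : v.2.2 = 0) (hy0 : 0 ≤ v.2.1)
    (hloc : ∀ y ∈ Icc (0:ℝ) v.2.1, X (v.1, y, 0) = (0, -(y * K), 0))
    (t : ℝ) (ht : 0 ≤ t) :
    φ t v = (v.1, Real.exp (-(K * t)) * v.2.1, 0) := by
  set f : ℝ → ℝ × ℝ × ℝ := fun s => φ s v with hf
  have hfd : ∀ s, HasDerivAt f (X (f s)) s := fun s => hφd v s
  set Y : ℝ → ℝ := fun s => (f s).2.1 with hY
  -- structure at each time
  have hstr : ∀ s, ∃ c, c ∈ Icc (0:ℝ) 1 ∧ X (f s) = (0, -(c * Y s * K), 0) := fun s => L1 (f s)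
  -- first coordinate constant
  have h1 : ∀ s, (f s).1 = v.1 := by
    have hd : ∀ s, HasDerivAt (fun u => (f u).1) 0 s := by
      intro s
      obtain ⟨c, _, hc⟩ := hstr s
      have := (coord_hasDerivAt (hfd s)).1
      rwa [hc] at this
    have := is_const_of_deriv_eq_zero (f := fun u => (f u).1)
      (fun s => (hd s).differentiableAt) (fun s => (hd s).deriv)
    intro s
    have h0 : (f 0).1 = v.1 := by simp [hf, hφ0]
    exact (this s 0).trans h0
  -- third coordinate constant = 0
  have h3 : ∀ s, (f s).2.2 = 0 := by
    have hd : ∀ s, HasDerivAt (fun u => (f u).2.2) 0 s := by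
      intro s
      obtain ⟨c, _, hc⟩ := hstr s
      have := (coord_hasDerivAt (hfd s)).2.2
      rwa [hc] at this
    have := is_const_of_deriv_eq_zero (f := fun u => (f u).2.2)
      (fun s => (hd s).differentiableAt) (fun s => (hd s).deriv)
    intro s
    have h0 : (f 0).2.2 = 0 := by simp [hf, hφ0, hz]
    exact (this s 0).trans h0
  have hY0 : Y 0 = v.2.1 := by simp [hY, hf, hφ0]
  have hYd : ∀ s, HasDerivAt Y ((X (f s)).2.1) s := fun s => (coord_hasDerivAt (hfd s)).2.1
  have hYdiff : Differentiable ℝ Y := fun s => (hYd s).differentiableAt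
  have hYcont : Continuous Y := hYdiff.continuous
  -- global bound on the derivative
  have hbound : ∀ s, |(X (f s)).2.1| ≤ K * |Y s| := by
    intro s
    obtain ⟨c, hc, hcs⟩ := hstr s
    rw [hcs]
    simp only [abs_neg, abs_mul, abs_of_pos hK]
    have hc1 : |c| ≤ 1 := abs_le.2 ⟨by linarith [hc.1], hc.2⟩
    nlinarith [mul_nonneg (mul_nonneg (sub_nonneg.2 hc1) (abs_nonneg (Y s))) hK.le]
  -- Gronwall: zero stays zero
  have hGron : ∀ t0 t1 : ℝ, t0 ≤ t1 → Y t0 = 0 → Y t1 = 0 := by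
    intro t0 t1 h01 hz0
    have := norm_le_gronwallBound_of_norm_deriv_right_le (f := Y)
      (f' := fun s => (X (f s)).2.1) (δ := 0) (K := K) (ε := 0) (a := t0) (b := t1)
      hYcont.continuousOn (fun x _ => (hYd x).hasDerivWithinAt)
      (by simp [hz0]) (fun x _ => by simpa using hbound x)
    have h := this t1 ⟨h01, le_refl _⟩
    have hb : gronwallBound 0 K 0 (t1 - t0) = 0 := by
      rw [gronwallBound_of_K_ne_0 hK.ne']; ring
    rw [hb] at h
    exact norm_le_zero_iff.mp h
  -- nonnegativity of Y on [0, ∞)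
  have hApos : ∀ s, 0 ≤ s → 0 ≤ Y s := by
    intro s hs
    by_contra hneg
    push_neg at hneg
    have : (0:ℝ) ∈ Icc (Y s) (Y 0) := ⟨hneg.le, by rw [hY0]; exact hy0⟩
    obtain ⟨t0, ht0, hYt0⟩ := intermediate_value_Icc' hs hYcont.continuousOn this
    have := hGron t0 s ht0.2 hYt0
    linarith
  -- Y nonincreasing on [0, ∞)
  have hAnti : AntitoneOn Y (Ici 0) := by
    apply antitoneOn_of_deriv_nonpos (convex_Ici 0) hYcont.continuousOn
      hYdiff.differentiableOn
    intro x hx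
    rw [interior_Ici] at hx
    obtain ⟨c, hc, hcs⟩ := hstr x
    rw [(hYd x).deriv, hcs]
    simp only
    have : 0 ≤ c * Y x * K :=
      mul_nonneg (mul_nonneg hc.1 (hApos x (le_of_lt hx))) hK.le
    linarith
  have hYrange : ∀ s, 0 ≤ s → Y s ∈ Icc (0:ℝ) v.2.1 := by
    intro s hs
    refine ⟨hApos s hs, ?_⟩
    have := hAnti (self_mem_Ici) hs hs
    rwa [hY0] at this
  -- f s = (v.1, Y s, 0)
  have hfform : ∀ s, f s = (v.1, Y s, 0) := by
    intro s
    have : f s = ((f s).1, (f s).2.1, (f s).2.2) := rfl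
    rw [this, h1 s, h3 s]
  -- exact derivative on [0, ∞)
  have hYexact : ∀ s, 0 ≤ s → HasDerivAt Y (-(Y s * K)) s := by
    intro s hs
    have := hYd s
    rw [hfform s, hloc (Y s) (hYrange s hs)] at this
    simpa using this
  -- integrating factor
  set Z : ℝ → ℝ := fun s => Y s * Real.exp (K * s) with hZ
  have hZd : ∀ s, 0 ≤ s → HasDerivAt Z 0 s := by
    intro s hs
    have h1' : HasDerivAt (fun u => Real.exp (K * u)) (K * Real.exp (K * s)) s := by
      exact ((Real.hasDerivAt_exp (K * s)).comp s
        ((hasDerivAt_id s).const_mul K)).congr_deriv (by simp [mul_comm])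
    have := (hYexact s hs).mul h1'
    exact this.congr_deriv (by ring)
  have hZconst : Z t = Z 0 := by
    rcases eq_or_lt_of_le ht with h | h
    · rw [← h]
    · have := constant_of_has_deriv_right_zero (f := Z) (a := 0) (b := t)
        ((hYcont.mul (Real.continuous_exp.comp (continuous_const.mul continuous_id))).continuousOn)
        (fun x hx => (hZd x hx.1).hasDerivWithinAt)
      exact this t ⟨ht, le_refl _⟩
  have hexp : Real.exp (K * t) ≠ 0 := Real.exp_ne_zero _
  have : Y t * Real.exp (K * t) = v.2.1 := by
    have h0 : Z 0 = v.2.1 := by simp [hZ, hY0]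
    rw [← h0, ← hZconst]
  have hYt : Y t = Real.exp (-(K * t)) * v.2.1 := by
    rw [Real.exp_neg]
    field_simp
    linarith [this]
  show f t = _
  rw [hfform t, hYt]
private lemma Eset_shrink {r : ℝ} (hr0 : 0 < r) {w : ℝ × ℝ × ℝ} (hw : w ∈ Eset r) :
    w.2.2 = 0 ∧ w.2.1 ∈ Icc (0:ℝ) (r / 2) ∧
      ∀ y ∈ Icc (0:ℝ) w.2.1, (w.1, y, 0) ∈ Eset r := by
  simp only [Eset, mem_union, mem_setOf_eq] at hw ⊢
  rcases hw with (⟨hx, hy, hz⟩ | ⟨hx, hy, hz⟩) | ⟨kk, hk1, hx, hy, hz⟩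
  · refine ⟨hz, by rw [hy]; exact ⟨le_refl _, by linarith⟩, ?_⟩
    intro y hy'
    rw [hy] at hy'
    have : y = 0 := le_antisymm hy'.2 hy'.1
    exact Or.inl (Or.inl ⟨hx, this, trivial⟩)
  · refine ⟨hz, hy, ?_⟩
    intro y hy'
    exact Or.inl (Or.inr ⟨hx, ⟨hy'.1, le_trans hy'.2 hy.2⟩, trivial⟩)
  · refine ⟨hz, hy, ?_⟩
    intro y hy'
    exact Or.inr ⟨kk, hk1, hx, ⟨hy'.1, le_trans hy'.2 hy.2⟩, trivial⟩

private lemma Eset_sub_Bset {r : ℝ} (hr0 : 0 < r) : Eset r ⊆ Bset r := by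
  intro w hw
  simp only [Eset, mem_union, mem_setOf_eq] at hw
  simp only [Bset, mem_setOf_eq]
  rcases hw with (⟨hx, hy, hz⟩ | ⟨hx, hy, hz⟩) | ⟨kk, hk1, hx, hy, hz⟩
  · rw [hy, hz]
    nlinarith [hx.1, hx.2]
  · rw [hx, hz]
    nlinarith [hy.1, hy.2]
  · have hkk : (1:ℝ) ≤ (kk : ℝ) := by exact_mod_cast hk1
    have h1 : r / (kk:ℝ) ≤ r := div_le_self hr0.le hkk
    have h2 : 0 < r / (kk:ℝ) := div_pos hr0 (by linarith)
    rw [hx, hz]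
    nlinarith [hy.1, hy.2]

private lemma T2pow_left_inv (k : ℤ) (p : ℝ × ℝ × ℝ) : T2pow (-k) (T2pow k p) = p := by
  simp only [T2pow, smul_smul, neg_neg]
  rw [← zpow_add₀ (by norm_num : (2:ℝ) ≠ 0)]
  simp
/-- On `E` the flow contracts the second coordinate exactly by a factor `4`
per unit time, and more generally the same holds on each `E_k = T₂ᵏ(E)`. -/
theorem stmt_10 (r : ℝ) (hr : r ∈ Ioo (0 : ℝ) (1 / 2))
    (ρ : ℝ × ℝ × ℝ → ℝ) (hρs : ContDiff ℝ (⊤ : ℕ∞) ρ) (hρ01 : ∀ v, ρ v ∈ Icc (0 : ℝ) 1)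
    (hρE : ρ ⁻¹' {1} = Eset r) (hρ0 : ∀ v ∉ interior (Bset r), ρ v = 0)
    (X : ℝ × ℝ × ℝ → ℝ × ℝ × ℝ)
    (hX : ∀ n : ℤ, ∀ v ∈ Bn r n, X v = (0, -(ρ (T2pow (-n) v) * v.2.1 * Real.log 4), 0))
    (hX0 : ∀ v : ℝ × ℝ × ℝ, (∀ n : ℤ, v ∉ Bn r n) → X v = 0)
    (φ : ℝ → ℝ × ℝ × ℝ → ℝ × ℝ × ℝ)
    (hφ0 : ∀ v, φ 0 v = v)
    (hφd : ∀ (v : ℝ × ℝ × ℝ) (t : ℝ), HasDerivAt (fun s => φ s v) (X (φ t v)) t) :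
    (∀ v ∈ Eset r, ∀ t : ℝ, 0 ≤ t → φ t v = (v.1, (4 : ℝ) ^ (-t) * v.2.1, 0)) ∧
    (∀ k : ℤ, ∀ v ∈ Ek r k, ∀ t : ℝ, 0 ≤ t → φ t v = (v.1, (4 : ℝ) ^ (-t) * v.2.1, 0)) := by
  obtain ⟨hr0, hr2⟩ := hr
  set K := Real.log 4 with hKdef
  have hK : 0 < K := Real.log_pos (by norm_num)
  -- global structure of X
  have L1 : ∀ w, ∃ c, c ∈ Icc (0:ℝ) 1 ∧ X w = (0, -(c * w.2.1 * K), 0) := by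
    intro w
    by_cases h : ∃ n : ℤ, w ∈ Bn r n
    · obtain ⟨n, hn⟩ := h
      exact ⟨ρ (T2pow (-n) w), hρ01 _, hX n w hn⟩
    · push_neg at h
      refine ⟨0, ⟨le_refl _, zero_le_one⟩, ?_⟩
      rw [hX0 w h]
      norm_num [Prod.ext_iff]
  -- main claim for each E_k
  have main : ∀ k : ℤ, ∀ v ∈ Ek r k, ∀ t : ℝ, 0 ≤ t →
      φ t v = (v.1, (4 : ℝ) ^ (-t) * v.2.1, 0) := by
    intro k v hv t ht
    obtain ⟨u, hu, huv⟩ := hv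
    set a : ℝ := (2:ℝ) ^ (-k) with ha
    have ha0 : 0 < a := zpow_pos (by norm_num) _
    have hva : v = (a * u.1, a * u.2.1, a * u.2.2) := by
      rw [← huv]; rfl
    obtain ⟨huz, huy, hushr⟩ := Eset_shrink hr0 hu
    have hz : v.2.2 = 0 := by rw [hva]; simp [huz]
    have hy0 : 0 ≤ v.2.1 := by
      rw [hva]; exact mul_nonneg ha0.le huy.1
    have hloc : ∀ y ∈ Icc (0:ℝ) v.2.1, X (v.1, y, 0) = (0, -(y * K), 0) := by
      intro y hy
      have hy2 : y / a ∈ Icc (0:ℝ) u.2.1 := by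
        constructor
        · exact div_nonneg hy.1 ha0.le
        · rw [div_le_iff₀ ha0]
          have := hy.2
          rw [hva] at this
          calc y ≤ a * u.2.1 := this
            _ = u.2.1 * a := by ring
      have hmem : (u.1, y / a, 0) ∈ Eset r := hushr _ hy2
      have heq : T2pow k (u.1, y / a, 0) = (v.1, y, 0) := by
        simp only [T2pow, Prod.smul_mk, smul_eq_mul, ← ha]
        rw [hva]
        field_simp
        simp
      have hBn : (v.1, y, 0) ∈ Bn r k := by
        rw [← heq]
        exact ⟨_, Eset_sub_Bset hr0 hmem, rfl⟩
      have hρ1 : ρ (T2pow (-k) (v.1, y, 0)) = 1 := by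
        rw [← heq, T2pow_left_inv]
        have : (u.1, y / a, 0) ∈ ρ ⁻¹' {1} := by rw [hρE]; exact hmem
        exact this
      rw [hX k _ hBn, hρ1]
      norm_num
    have := core_lemma K hK X L1 φ hφ0 hφd v hz hy0 hloc t ht
    rw [this]
    have h4 : (4:ℝ) ^ (-t) = Real.exp (-(K * t)) := by
      rw [Real.rpow_def_of_pos (by norm_num : (0:ℝ) < 4)]
      congr 1
      rw [hKdef]; ring
    rw [h4]
  refine ⟨?_, main⟩
  intro v hv t ht
  apply main 0 v _ t ht
  refine ⟨v, hv, ?_⟩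
  simp [T2pow]
end
end

section
/- For every k ∈ ℤ, f(E_k) = E_{k+1}, where E_k = T₂ᵏ(E) and f = T₁ ∘ φ₁. -/
noncomputable section

open Set Filter Topology

/-! ### Auxiliary lemmas -/

lemma T2pow_fst (n : ℤ) (u : ℝ × ℝ × ℝ) : (T2pow n u).1 = (2 : ℝ) ^ (-n) * u.1 := rfl

lemma T2pow_snd_fst (n : ℤ) (u : ℝ × ℝ × ℝ) :
    (T2pow n u).2.1 = (2 : ℝ) ^ (-n) * u.2.1 := rfl

lemma T2pow_snd_snd (n : ℤ) (u : ℝ × ℝ × ℝ) :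
    (T2pow n u).2.2 = (2 : ℝ) ^ (-n) * u.2.2 := rfl

lemma T2pow_cancel (n : ℤ) (u : ℝ × ℝ × ℝ) : T2pow n (T2pow (-n) u) = u := by
  simp only [T2pow, smul_smul, neg_neg]
  rw [← zpow_add₀ (two_ne_zero : (2:ℝ) ≠ 0)]
  simp

lemma mem_Bn_iff {r : ℝ} (n : ℤ) (u : ℝ × ℝ × ℝ) :
    u ∈ Bn r n ↔ T2pow (-n) u ∈ Bset r := by
  constructor
  · rintro ⟨b, hb, rfl⟩
    have : T2pow (-n) (T2pow n b) = b := by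
      have := T2pow_cancel (-n) b
      simpa using this
    rwa [this]
  · intro h
    exact ⟨T2pow (-n) u, h, T2pow_cancel n u⟩

lemma zpow_two_eq_zero_of_bounds {m : ℤ} (h1 : (1/2 : ℝ) < 2 ^ m) (h2 : (2:ℝ) ^ m < 2) :
    m = 0 := by
  by_contra hm
  rcases lt_or_gt_of_ne hm with h | h
  · have : (2:ℝ) ^ m ≤ 2 ^ (-1 : ℤ) := zpow_le_zpow_right₀ one_le_two (by omega)
    rw [zpow_neg_one] at this
    norm_num at this
    linarith
  · have : (2:ℝ) ^ (1 : ℤ) ≤ 2 ^ m := zpow_le_zpow_right₀ one_le_two (by omega)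
    rw [zpow_one] at this
    linarith

set_option maxHeartbeats 2000000 in
/-- For every `k ∈ ℤ`, `f(E_k) = E_{k+1}`, where `f = T₁ ∘ φ₁`. -/
theorem stmt_11 (r : ℝ) (hr : r ∈ Ioo (0 : ℝ) (1 / 2))
    (ρ : ℝ × ℝ × ℝ → ℝ) (hρs : ContDiff ℝ (⊤ : ℕ∞) ρ) (hρ01 : ∀ v, ρ v ∈ Icc (0 : ℝ) 1)
    (hρE : ρ ⁻¹' {1} = Eset r) (hρ0 : ∀ v ∉ interior (Bset r), ρ v = 0)
    (X : ℝ × ℝ × ℝ → ℝ × ℝ × ℝ)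
    (hX : ∀ n : ℤ, ∀ v ∈ Bn r n, X v = (0, -(ρ (T2pow (-n) v) * v.2.1 * Real.log 4), 0))
    (hX0 : ∀ v : ℝ × ℝ × ℝ, (∀ n : ℤ, v ∉ Bn r n) → X v = 0)
    (φ : ℝ → ℝ × ℝ × ℝ → ℝ × ℝ × ℝ)
    (hφ0 : ∀ v, φ 0 v = v)
    (hφd : ∀ (v : ℝ × ℝ × ℝ) (t : ℝ), HasDerivAt (fun s => φ s v) (X (φ t v)) t) :
    ∀ k : ℤ, (fun v => T1 (φ 1 v)) '' Ek r k = Ek r (k + 1) := by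
  obtain ⟨hr0, hr2⟩ := hr
  set L := Real.log 4 with hLdef
  have hL : 0 < L := Real.log_pos (by norm_num)
  -- Basic properties of points of `Eset r`
  have hEprops : ∀ u ∈ Eset r, u.2.2 = 0 ∧ 0 ≤ u.2.1 ∧ u.2.1 ≤ r/2 ∧
      3/2 - r/2 ≤ u.1 ∧ u.1 ≤ 3/2 + r/2 := by
    intro u hu
    simp only [Eset, Set.mem_union, Set.mem_setOf_eq, Set.mem_Icc] at hu
    rcases hu with ((⟨hx, hy, hz⟩ | ⟨hx, hy, hz⟩) | ⟨j, hj1, hx, hy, hz⟩)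
    · exact ⟨hz, le_of_eq hy.symm, by rw [hy]; positivity, hx.1, hx.2⟩
    · exact ⟨hz, hy.1, hy.2, le_of_eq hx.symm, by rw [hx]; linarith⟩
    · have hj : (1:ℝ) ≤ (j:ℝ) := by exact_mod_cast hj1
      have h0 : 0 < r / (j:ℝ) := by positivity
      have h1 : r / (j:ℝ) ≤ r := by
        rw [div_le_iff₀ (by linarith)]
        nlinarith
      exact ⟨hz, hy.1, hy.2, by rw [hx]; linarith, by rw [hx]; linarith⟩
  -- `Eset r` is stable under lowering the `y`-coordinate
  have hElower : ∀ u ∈ Eset r, ∀ s : ℝ, 0 ≤ s → s ≤ u.2.1 →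
      ((u.1, s, 0) : ℝ × ℝ × ℝ) ∈ Eset r := by
    intro u hu s hs0 hsu
    obtain ⟨hz, hy0, hyr, hxl, hxr⟩ := hEprops u hu
    simp only [Eset, Set.mem_union, Set.mem_setOf_eq, Set.mem_Icc] at hu ⊢
    rcases hs0.eq_or_lt with h | h
    · exact Or.inl (Or.inl ⟨⟨hxl, hxr⟩, h.symm, trivial⟩)
    · rcases hu with ((⟨hx, hy, _⟩ | ⟨hx, hy, _⟩) | ⟨j, hj1, hx, hy, _⟩)
      · exact absurd (hsu.trans_eq hy) (not_le.mpr h)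
      · exact Or.inl (Or.inr ⟨hx, ⟨hs0, hsu.trans hy.2⟩, trivial⟩)
      · exact Or.inr ⟨j, hj1, hx, ⟨hs0, hsu.trans hy.2⟩, trivial⟩
  -- `X` always has vanishing first and third components
  have hX13 : ∀ u, (X u).1 = 0 ∧ (X u).2.2 = 0 := by
    intro u
    by_cases h : ∃ n, u ∈ Bn r n
    · obtain ⟨n, hn⟩ := h
      rw [hX n u hn]
      exact ⟨rfl, rfl⟩
    · push_neg at h
      rw [hX0 u h]
      exact ⟨rfl, rfl⟩
  intro k
  have h2k : (0:ℝ) < (2:ℝ) ^ (k:ℤ) := zpow_pos two_pos _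
  -- the key pointwise computation
  have key : ∀ v ∈ Ek r k, T1 (φ 1 v) = T2 v := by
    rintro v ⟨w0, hw0E, rfl⟩
    obtain ⟨hw0z, hw0y0, hw0yr, hw0xl, hw0xr⟩ := hEprops w0 hw0E
    set v := T2pow k w0 with hvdef
    have hkx : (2:ℝ) ^ (k:ℤ) * v.1 = w0.1 := by
      rw [hvdef, T2pow_fst, ← mul_assoc, ← zpow_add₀ (two_ne_zero : (2:ℝ) ≠ 0)]
      simp
    have hky : (2:ℝ) ^ (k:ℤ) * v.2.1 = w0.2.1 := by
      rw [hvdef, T2pow_snd_fst, ← mul_assoc, ← zpow_add₀ (two_ne_zero : (2:ℝ) ≠ 0)]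
      simp
    have hvz : v.2.2 = 0 := by
      rw [hvdef, T2pow_snd_snd, hw0z, mul_zero]
    have hvy0 : 0 ≤ v.2.1 := by
      have : 0 ≤ (2:ℝ) ^ (k:ℤ) * v.2.1 := hky ▸ hw0y0
      nlinarith
    clear_value v
    -- constancy of first and third coordinates
    have hd1 : ∀ t, HasDerivAt (fun s => (φ s v).1) 0 t := by
      intro t
      have h := ((hφd v t).hasFDerivAt.fst).hasDerivAt
      simpa [(hX13 (φ t v)).1] using h
    have hd3 : ∀ t, HasDerivAt (fun s => (φ s v).2.2) 0 t := by
      intro t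
      have h := (((hφd v t).hasFDerivAt.snd).snd).hasDerivAt
      simpa [(hX13 (φ t v)).2] using h
    have hc1 : ∀ t, (φ t v).1 = v.1 := by
      intro t
      have := is_const_of_deriv_eq_zero (𝕜 := ℝ) (f := fun s => (φ s v).1)
        (fun s => (hd1 s).differentiableAt) (fun s => (hd1 s).deriv) t 0
      simpa [hφ0] using this
    have hc3 : ∀ t, (φ t v).2.2 = 0 := by
      intro t
      have := is_const_of_deriv_eq_zero (𝕜 := ℝ) (f := fun s => (φ s v).2.2)
        (fun s => (hd3 s).differentiableAt) (fun s => (hd3 s).deriv) t 0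
      simpa [hφ0, hvz] using this
    -- x-coordinate range pins down the ball
    have hxrange : 1 < (2:ℝ) ^ (k:ℤ) * v.1 ∧ (2:ℝ) ^ (k:ℤ) * v.1 < 2 := by
      rw [hkx]; constructor <;> nlinarith
    have hv1pos : 0 < v.1 := by nlinarith [hxrange.1]
    have honlyk : ∀ t n, φ t v ∈ Bn r n → n = k := by
      intro t n hn
      rw [mem_Bn_iff] at hn
      have hB : ((2:ℝ) ^ (n:ℤ) * v.1 - 3/2)^2 + ((2:ℝ)^(n:ℤ) * (φ t v).2.1)^2
          + ((2:ℝ)^(n:ℤ) * (φ t v).2.2)^2 ≤ r^2 := by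
        have := hn
        simp only [Bset, mem_setOf_eq, T2pow_fst, T2pow_snd_fst, T2pow_snd_snd,
          neg_neg, hc1 t] at this
        exact this
      have h1 : ((2:ℝ) ^ (n:ℤ) * v.1 - 3/2)^2 ≤ r^2 := by nlinarith [sq_nonneg ((2:ℝ)^(n:ℤ) * (φ t v).2.1), sq_nonneg ((2:ℝ)^(n:ℤ) * (φ t v).2.2)]
      have h2n : (0:ℝ) < (2:ℝ) ^ (n:ℤ) := zpow_pos two_pos _
      have hnlt : 1 < (2:ℝ) ^ (n:ℤ) * v.1 ∧ (2:ℝ) ^ (n:ℤ) * v.1 < 2 := by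
        constructor <;> nlinarith
      have hq : (2:ℝ) ^ (n - k) = ((2:ℝ) ^ (n:ℤ) * v.1) / ((2:ℝ) ^ (k:ℤ) * v.1) := by
        rw [zpow_sub₀ (two_ne_zero : (2:ℝ) ≠ 0)]
        field_simp
      have hb0 : (0:ℝ) < (2:ℝ) ^ (k:ℤ) * v.1 := by linarith [hxrange.1]
      have hlow : (1/2 : ℝ) < (2:ℝ) ^ (n - k) := by
        rw [hq, lt_div_iff₀ hb0]
        nlinarith [hxrange.2, hnlt.1]
      have hhigh : (2:ℝ) ^ (n - k) < 2 := by
        rw [hq, div_lt_iff₀ hb0]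
        nlinarith [hxrange.1, hnlt.2]
      have := zpow_two_eq_zero_of_bounds hlow hhigh
      omega
    -- the y-coordinate ODE
    set Y : ℝ → ℝ := fun t => (φ t v).2.1 with hYdef
    set c : ℝ → ℝ := fun t => ρ (T2pow (-k) (φ t v)) with hcdef
    have hdY : ∀ t, HasDerivAt Y (-(c t * Y t * L)) t := by
      intro t
      have hYF := (((hφd v t).hasFDerivAt.snd).fst).hasDerivAt
      have h2 : (X (φ t v)).2.1 = -(c t * Y t * L) := by
        by_cases hb : φ t v ∈ Bn r k
        · rw [hX k _ hb]
        · have hnone : ∀ n, φ t v ∉ Bn r n := by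
            intro n hn
            exact hb ((honlyk t n hn) ▸ hn)
          rw [hX0 _ hnone]
          have hcz : c t = 0 := by
            apply hρ0
            intro hmem
            exact hb ((mem_Bn_iff k _).2 (interior_subset hmem))
          simp [hcz]
      rw [← h2]
      simpa using hYF
    have hφcont : Continuous (fun t => φ t v) :=
      continuous_iff_continuousAt.2 fun t => (hφd v t).continuousAt
    have hccont : Continuous c := by
      have : Continuous (fun t => T2pow (-k) (φ t v)) := by
        simp only [T2pow]
        exact (continuous_const (y := ((2:ℝ) ^ (- -k)))).smul hφcont
      exact hρs.continuous.comp this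
    have hc01 : ∀ t, 0 ≤ c t ∧ c t ≤ 1 := fun t => ⟨(hρ01 _).1, (hρ01 _).2⟩
    -- integrate: A t = ∫₀ᵗ L c
    set A : ℝ → ℝ := fun t => ∫ s in (0:ℝ)..t, L * c s with hAdef
    have hLc : Continuous (fun s => L * c s) := continuous_const.mul hccont
    have hA : ∀ t, HasDerivAt A (L * c t) t := by
      intro t
      exact intervalIntegral.integral_hasDerivAt_right (hLc.intervalIntegrable 0 t)
        (hLc.stronglyMeasurableAtFilter _ _) hLc.continuousAt
    have hG : ∀ t, HasDerivAt (fun t => Y t * Real.exp (A t)) 0 t := by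
      intro t
      have := (hdY t).mul ((hA t).exp)
      have h0 : -(c t * Y t * L) * Real.exp (A t) + Y t * (Real.exp (A t) * (L * c t)) = 0 := by ring
      rw [h0] at this
      exact this
    have hGconst : ∀ t, Y t * Real.exp (A t) = v.2.1 := by
      intro t
      have := is_const_of_deriv_eq_zero (𝕜 := ℝ) (f := fun t => Y t * Real.exp (A t))
        (fun s => (hG s).differentiableAt) (fun s => (hG s).deriv) t 0
      rw [this]
      simp [hYdef, hAdef, hφ0, intervalIntegral.integral_same]
    -- on [0,1] : A ≥ 0, hence 0 ≤ Y t ≤ v.2.1, hence c t = 1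
    have hcone : ∀ t ∈ Icc (0:ℝ) 1, c t = 1 := by
      intro t ht
      have hAnn : 0 ≤ A t := by
        apply intervalIntegral.integral_nonneg ht.1
        intro u _
        exact mul_nonneg hL.le (hc01 u).1
      have hexp : Real.exp (A t) ≥ 1 := Real.one_le_exp hAnn
      have hexp0 : (0:ℝ) < Real.exp (A t) := Real.exp_pos _
      have hYnn : 0 ≤ Y t := by
        have := hGconst t
        nlinarith
      have hYle : Y t ≤ v.2.1 := by
        have := hGconst t
        nlinarith
      have hmemE : T2pow (-k) (φ t v) ∈ Eset r := by
        have hpt : T2pow (-k) (φ t v) = ((w0.1, (2:ℝ)^(k:ℤ) * Y t, 0) : ℝ × ℝ × ℝ) := by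
          have e1 : (T2pow (-k) (φ t v)).1 = w0.1 := by
            rw [T2pow_fst, neg_neg, hc1 t, hkx]
          have e2 : (T2pow (-k) (φ t v)).2.1 = (2:ℝ)^(k:ℤ) * Y t := by
            rw [T2pow_snd_fst, neg_neg]
          have e3 : (T2pow (-k) (φ t v)).2.2 = 0 := by
            rw [T2pow_snd_snd, neg_neg, hc3 t, mul_zero]
          exact Prod.ext e1 (Prod.ext e2 e3)
        rw [hpt]
        apply hElower w0 hw0E
        · exact mul_nonneg h2k.le hYnn
        · rw [← hky]
          exact mul_le_mul_of_nonneg_left hYle h2k.le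
      rw [← hρE] at hmemE
      exact hmemE
    -- conclude Y 1 = v.2.1 / 4
    have hH : ∀ t ∈ Ico (0:ℝ) 1, HasDerivWithinAt (fun t => Y t * Real.exp (L * t)) 0 (Ici t) t := by
      intro t ht
      have hd : HasDerivAt (fun t : ℝ => L * t) L t := by
        simpa using (hasDerivAt_id t).const_mul L
      have := (hdY t).mul hd.exp
      have hc1t : c t = 1 := hcone t ⟨ht.1, ht.2.le⟩
      rw [hc1t] at this
      have h0 : -(1 * Y t * L) * Real.exp (L * t) + Y t * (Real.exp (L * t) * L) = 0 := by ring
      rw [h0] at this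
      exact this.hasDerivWithinAt
    have hHcont : ContinuousOn (fun t => Y t * Real.exp (L * t)) (Icc (0:ℝ) 1) := by
      apply Continuous.continuousOn
      have hYc : Continuous Y := continuous_iff_continuousAt.2 fun t => (hdY t).continuousAt
      exact hYc.mul ((continuous_const.mul continuous_id).rexp)
    have hfinal := constant_of_has_deriv_right_zero hHcont hH 1 (by norm_num : (1:ℝ) ∈ Icc (0:ℝ) 1)
    have hexpL : Real.exp (L * 1) = 4 := by
      rw [mul_one, hLdef, Real.exp_log (by norm_num : (0:ℝ) < 4)]
    have hY0 : Y 0 = v.2.1 := by simp [hYdef, hφ0]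
    have hY1 : Y 1 = v.2.1 / 4 := by
      rw [hexpL, hY0] at hfinal
      simp only [mul_zero, Real.exp_zero, mul_one] at hfinal
      linarith
    -- assemble
    have hφ1 : φ 1 v = ((v.1, v.2.1 / 4, 0) : ℝ × ℝ × ℝ) :=
      Prod.ext (hc1 1) (Prod.ext hY1 (hc3 1))
    rw [hφ1]
    simp only [T1, T2]
    refine Prod.ext rfl (Prod.ext (by ring) ?_)
    rw [hvz]
    norm_num
  rw [Set.image_congr key]
  show T2 '' Ek r k = Ek r (k+1)
  rw [Ek, Ek, ← Set.image_comp]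
  apply Set.image_congr'
  intro u
  show T2 (T2pow k u) = T2pow (k+1) u
  have h2 : (2:ℝ) ^ (-(k+1)) = (2:ℝ) ^ (-k) / 2 := by
    rw [show -(k+1) = -k + (-1) by ring, zpow_add₀ (two_ne_zero : (2:ℝ) ≠ 0), zpow_neg_one]
    ring
  simp only [T2, T2pow, Prod.smul_mk, smul_eq_mul]
  refine Prod.ext ?_ (Prod.ext ?_ ?_) <;>
    simp only [Prod.smul_fst, Prod.smul_snd, smul_eq_mul, h2] <;> ring
end
end

section
/- Let (a,y,0) ∈ B with y > 0 and (a,y,0) ∉ E. Then the second coordinate of T₂⁻¹(f(a,y,0)) is strictly greater than y; equivalently, writing g(y) for the second coordinate of T₂⁻¹(f(a,y,0)), one has g(y) = 4·α(1) > y, where α(t) is the second coordinate of φ(t,(a,y,0)). -/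
noncomputable section

open Set Filter Topology

/-- If `(a,y,0) ∈ B`, `y > 0` and `(a,y,0) ∉ E`, then the second coordinate
`g(y)` of `T₂⁻¹(f(a,y,0))` equals `4·α(1)` and satisfies `g(y) > y`, where `α(t)` is the
second coordinate of `φ(t,(a,y,0))` and `f = T₁ ∘ φ₁`. -/
theorem stmt_15 (r : ℝ) (hr : r ∈ Ioo (0 : ℝ) (1 / 2))
    (ρ : ℝ × ℝ × ℝ → ℝ) (hρs : ContDiff ℝ (⊤ : ℕ∞) ρ) (hρ01 : ∀ v, ρ v ∈ Icc (0 : ℝ) 1)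
    (hρE : ρ ⁻¹' {1} = Eset r) (hρ0 : ∀ v ∉ interior (Bset r), ρ v = 0)
    (X : ℝ × ℝ × ℝ → ℝ × ℝ × ℝ)
    (hX : ∀ n : ℤ, ∀ v ∈ Bn r n, X v = (0, -(ρ (T2pow (-n) v) * v.2.1 * Real.log 4), 0))
    (hX0 : ∀ v : ℝ × ℝ × ℝ, (∀ n : ℤ, v ∉ Bn r n) → X v = 0)
    (φ : ℝ → ℝ × ℝ × ℝ → ℝ × ℝ × ℝ)
    (hφ0 : ∀ v, φ 0 v = v)
    (hφd : ∀ (v : ℝ × ℝ × ℝ) (t : ℝ), HasDerivAt (fun s => φ s v) (X (φ t v)) t)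
    (a y : ℝ) (hy : 0 < y)
    (hmem : ((a, y, 0) : ℝ × ℝ × ℝ) ∈ Bset r)
    (hnE : ((a, y, 0) : ℝ × ℝ × ℝ) ∉ Eset r) :
    (T2pow (-1) (T1 (φ 1 (a, y, 0)))).2.1 = 4 * (φ 1 (a, y, 0)).2.1 ∧
    y < (T2pow (-1) (T1 (φ 1 (a, y, 0)))).2.1 := by

  have hL : (0:ℝ) < Real.log 4 := Real.log_pos (by norm_num)
  set L := Real.log 4 with hLdef
  set v : ℝ × ℝ × ℝ := (a, y, 0) with hvdef
  set α : ℝ → ℝ := fun t => (φ t v).2.1 with hαdef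
  set ψ : ℝ → ℝ := fun t => α t * Real.exp (L * t) with hψdef
  have hα0 : α 0 = y := by simp [hαdef, hφ0, hvdef]
  have hψ0 : ψ 0 = y := by simp [hψdef, hα0]
  -- derivative of α
  have hαd : ∀ t, HasDerivAt α ((X (φ t v)).2.1) t := fun t => ((hφd v t).snd).fst
  -- the derivative has the right form
  have hc : ∀ t, ∃ c, 0 ≤ c ∧ c ≤ 1 ∧ (X (φ t v)).2.1 = -(c * α t * L) := by
    intro t
    by_cases h : ∃ n : ℤ, φ t v ∈ Bn r n
    · obtain ⟨n, hn⟩ := h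
      refine ⟨ρ (T2pow (-n) (φ t v)), (hρ01 _).1, (hρ01 _).2, ?_⟩
      rw [hX n _ hn]
    · push_neg at h
      exact ⟨0, le_refl _, zero_le_one, by rw [hX0 _ h]; simp⟩
  -- derivative of ψ
  have hexpd : ∀ t : ℝ, HasDerivAt (fun s => Real.exp (L * s)) (Real.exp (L * t) * L) t := by
    intro t
    have h1 : HasDerivAt (fun s : ℝ => L * s) L t := by
      simpa using (hasDerivAt_id t).const_mul L
    simpa using h1.exp
  have hψd : ∀ t, ∃ c, 0 ≤ c ∧ c ≤ 1 ∧ HasDerivAt ψ ((1 - c) * L * ψ t) t := by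
    intro t
    obtain ⟨c, hc0, hc1, hd⟩ := hc t
    refine ⟨c, hc0, hc1, ?_⟩
    have H := (hαd t).mul (hexpd t)
    rw [hd] at H
    have : -(c * α t * L) * Real.exp (L * t) + α t * (Real.exp (L * t) * L)
        = (1 - c) * L * ψ t := by simp [hψdef]; ring
    exact this ▸ H
  have hψdiff : Differentiable ℝ ψ := by
    intro t
    obtain ⟨c, _, _, hd⟩ := hψd t
    exact hd.differentiableAt
  have hψcont : Continuous ψ := hψdiff.continuous
  -- positivity of ψ on [0,1]
  have hpos : ∀ t ∈ Icc (0:ℝ) 1, 0 < ψ t := by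
    by_contra hcon
    push_neg at hcon
    obtain ⟨t₀, ht₀, ht₀le⟩ := hcon
    set S : Set ℝ := Icc (0:ℝ) 1 ∩ ψ ⁻¹' Iic 0 with hSdef
    have hSclosed : IsClosed S := isClosed_Icc.inter (isClosed_Iic.preimage hψcont)
    have hSne : S.Nonempty := ⟨t₀, ht₀, ht₀le⟩
    have hSbdd : BddBelow S := ⟨0, fun s hs => hs.1.1⟩
    set T := sInf S with hTdef
    have hTS : T ∈ S := hSclosed.csInf_mem hSne hSbdd
    have hT0 : 0 < T := by
      rcases lt_or_eq_of_le hTS.1.1 with h | h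
      · exact h
      · exfalso; have := hTS.2; rw [← h] at this; simp [hψ0] at this; linarith
    have hbefore : ∀ s ∈ Ico (0:ℝ) T, 0 < ψ s := by
      intro s hs
      by_contra hps
      push_neg at hps
      have hsS : s ∈ S := ⟨⟨hs.1, le_trans hs.2.le hTS.1.2⟩, hps⟩
      exact absurd (csInf_le hSbdd hsS) (not_le.mpr hs.2)
    have hmono : MonotoneOn ψ (Icc 0 T) := by
      apply monotoneOn_of_deriv_nonneg (convex_Icc 0 T) hψcont.continuousOn
        (fun s _ => (hψdiff s).differentiableWithinAt)
      intro s hs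
      rw [interior_Icc] at hs
      obtain ⟨c, hc0, hc1, hd⟩ := hψd s
      rw [hd.deriv]
      have := hbefore s ⟨hs.1.le, hs.2⟩
      have h1c : (0:ℝ) ≤ 1 - c := by linarith
      positivity
    have := hmono ⟨le_refl 0, hT0.le⟩ ⟨hT0.le, le_refl T⟩ hT0.le
    rw [hψ0] at this
    have := hTS.2
    simp only [mem_preimage, mem_Iic] at this
    linarith
  -- ψ is monotone on [0,1]
  have hmono : MonotoneOn ψ (Icc 0 1) := by
    apply monotoneOn_of_deriv_nonneg (convex_Icc 0 1) hψcont.continuousOn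
      (fun s _ => (hψdiff s).differentiableWithinAt)
    intro s hs
    rw [interior_Icc] at hs
    obtain ⟨c, hc0, hc1, hd⟩ := hψd s
    rw [hd.deriv]
    have := hpos s ⟨hs.1.le, hs.2.le⟩
    have h1c : (0:ℝ) ≤ 1 - c := by linarith
    positivity
  -- strict increase near 0
  have hv0 : v ∈ Bn r 0 := ⟨v, hmem, by simp [T2pow]⟩
  have hρv : ρ v < 1 := by
    refine lt_of_le_of_ne (hρ01 v).2 fun h => hnE ?_
    rw [← hρE]; exact h
  have hXv : (X v).2.1 = -(ρ v * y * L) := by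
    rw [hX 0 v hv0]
    simp [T2pow, hvdef]
  have hψd0 : HasDerivAt ψ ((1 - ρ v) * L * y) 0 := by
    have H := (hαd 0).mul (hexpd 0)
    rw [hφ0] at H
    rw [hXv] at H
    have hα0' : (φ 0 v).2.1 = y := by rw [hφ0]
    have : -(ρ v * y * L) * Real.exp (L * 0) + (φ 0 v).2.1 * (Real.exp (L * 0) * L)
        = (1 - ρ v) * L * y := by rw [hα0']; simp; try ring
    exact this ▸ H
  have hD : 0 < (1 - ρ v) * L * y := by
    have : (0:ℝ) < 1 - ρ v := by linarith
    positivity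
  -- find t > 0 small with ψ t > y
  have hslope := hasDerivAt_iff_tendsto_slope.mp hψd0
  have hev : ∀ᶠ t in 𝓝[≠] (0:ℝ), 0 < slope ψ 0 t := hslope.eventually_const_lt hD
  have hle : 𝓝[>] (0:ℝ) ≤ 𝓝[≠] (0:ℝ) := nhdsWithin_mono _ fun x hx => ne_of_gt hx
  have hev2 : ∀ᶠ t in 𝓝[>] (0:ℝ), 0 < slope ψ 0 t := hle hev
  have hev3 : ∀ᶠ t in 𝓝[>] (0:ℝ), t < 1 := by
    have : Ioo (0:ℝ) 1 ∈ 𝓝[>] (0:ℝ) := Ioo_mem_nhdsGT_of_mem ⟨le_refl 0, one_pos⟩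
    filter_upwards [this] with t ht using ht.2
  have hev4 : ∀ᶠ t in 𝓝[>] (0:ℝ), 0 < t := eventually_mem_nhdsWithin
  obtain ⟨t, hst, ht1, ht0⟩ := (hev2.and (hev3.and hev4)).exists
  have hψt : y < ψ t := by
    have : slope ψ 0 t = (ψ t - ψ 0) / t := by
      simp [slope_def_field]
    rw [this, hψ0] at hst
    have := (div_pos_iff.mp hst)
    rcases this with ⟨h1, _⟩ | ⟨_, h2⟩
    · linarith
    · linarith
  have hψ1 : y < ψ 1 := by
    have := hmono ⟨ht0.le, ht1.le⟩ ⟨zero_le_one, le_refl 1⟩ ht1.le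
    linarith
  have hψ1eq : ψ 1 = 4 * α 1 := by
    have h4 : Real.exp (L * 1) = 4 := by
      rw [mul_one, hLdef, Real.exp_log (by norm_num)]
    show α 1 * Real.exp (L * 1) = 4 * α 1
    rw [h4]; ring
  have hcoord : (T2pow (-1) (T1 (φ 1 v))).2.1 = 4 * (φ 1 v).2.1 := by
    simp [T2pow, T1]
    ring
  refine ⟨hcoord, ?_⟩
  rw [hcoord]
  have : α 1 = (φ 1 v).2.1 := rfl
  rw [hψ1eq, this] at hψ1
  exact hψ1
end
end

section
/- The set W̃ = ⋃_{k∈ℤ} E_k ∪ {(x,0,0) : x ∈ ℝ} is connected but not locally connected. -/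
noncomputable section

open Set Filter Topology

/-!
`W̃` is the union of the line `y = z = 0` with the combs `E_k`, each connected and meeting the
line, so it is connected. Near the tip `(3/2 - r/2, r/2, 0)` of the limit tooth of `E`, the set `W̃`
consists of teeth of `E` only (the `E_k` with `k ≠ 0` are too low or too far out), so there the
`x`-coordinate takes countably many values and is constant on any connected neighbourhood of the
tip. But the tips of the teeth `x = 3/2 - r/2 + r/k` accumulate at it.
-/

section LocallyConstant

variable {X Y : Type*} [TopologicalSpace X] [LocallyConnectedSpace X] [MetricSpace Y]

theorem eventually_eq_of_countable_image {f : X → Y} (hf : Continuous f) {x : X} {U : Set X}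
    (hU : U ∈ 𝓝 x) (hcount : (f '' U).Countable) : ∀ᶠ y in 𝓝 x, f y = f x := by
  filter_upwards [connectedComponentIn_mem_nhds hU] with y hy
  have hsub : (f '' connectedComponentIn U x).Subsingleton :=
    hcount.isTotallyDisconnected _ (image_mono (connectedComponentIn_subset U x))
      (isPreconnected_connectedComponentIn.image f hf.continuousOn)
  exact hsub (mem_image_of_mem f hy)
    (mem_image_of_mem f (mem_connectedComponentIn (mem_of_mem_nhds hU)))

end LocallyConstant

def baseSeg (r : ℝ) : Set (ℝ × ℝ × ℝ) := Icc (3 / 2 - r / 2) (3 / 2 + r / 2) ×ˢ ({0} ×ˢ {0})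

def tooth (r c : ℝ) : Set (ℝ × ℝ × ℝ) := {c} ×ˢ (Icc 0 (r / 2) ×ˢ {0})

def axisLine : Set (ℝ × ℝ × ℝ) := univ ×ˢ ({0} ×ˢ {0})

section Comb

variable {r : ℝ}

theorem isPreconnected_baseSeg : IsPreconnected (baseSeg r) :=
  isPreconnected_Icc.prod (isPreconnected_singleton.prod isPreconnected_singleton)

theorem isPreconnected_tooth (c : ℝ) : IsPreconnected (tooth r c) :=
  isPreconnected_singleton.prod (isPreconnected_Icc.prod isPreconnected_singleton)

theorem isPreconnected_axisLine : IsPreconnected axisLine :=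
  isPreconnected_univ.prod (isPreconnected_singleton.prod isPreconnected_singleton)

theorem isPreconnected_baseSeg_union_tooth (hr : 0 ≤ r) {c : ℝ}
    (hc : c ∈ Icc (3 / 2 - r / 2) (3 / 2 + r / 2)) : IsPreconnected (baseSeg r ∪ tooth r c) :=
  isPreconnected_baseSeg.union (c, 0, 0) ⟨hc, rfl, rfl⟩ ⟨rfl, ⟨le_rfl, by linarith⟩, rfl⟩
    (isPreconnected_tooth c)

theorem Eset_subset (hr : 0 ≤ r) :
    Eset r ⊆ Icc (3 / 2 - r / 2) (3 / 2 + r / 2) ×ˢ (Icc 0 (r / 2) ×ˢ {0}) := by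
  rintro v ((⟨h1, h2, h3⟩ | ⟨h1, h2, h3⟩) | ⟨k, hk, h1, h2, h3⟩)
  · exact ⟨h1, ⟨h2.ge, by linarith [h2]⟩, h3⟩
  · exact ⟨⟨h1.ge, by linarith⟩, h2, h3⟩
  · have hrk : r / k ≤ r := div_le_self hr (by exact_mod_cast hk)
    exact ⟨⟨by linarith [div_nonneg hr k.cast_nonneg], by linarith⟩, h2, h3⟩

theorem isPreconnected_Eset (hr : 0 ≤ r) : IsPreconnected (Eset r) := by
  have hcorner : ((3 / 2 - r / 2 : ℝ), (0 : ℝ), (0 : ℝ)) ∈ baseSeg r :=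
    ⟨⟨le_rfl, by linarith⟩, rfl, rfl⟩
  have hbase : baseSeg r ⊆ Eset r := fun v hv => Or.inl (Or.inl hv)
  have hteeth : ∀ c ∈ Icc (3 / 2 - r / 2) (3 / 2 + r / 2), tooth r c ⊆ Eset r →
      ∀ y ∈ tooth r c, ∃ t ⊆ Eset r, (3 / 2 - r / 2, 0, 0) ∈ t ∧ y ∈ t ∧ IsPreconnected t :=
    fun c hc hsub y hy => ⟨_, union_subset hbase hsub, Or.inl hcorner, Or.inr hy,
      isPreconnected_baseSeg_union_tooth hr hc⟩
  refine isPreconnected_of_forall (3 / 2 - r / 2, 0, 0) fun y hy => ?_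
  have hy1 := (Eset_subset hr hy).1
  rcases hy with (hy | hy) | ⟨k, hk, hy⟩
  · exact ⟨_, hbase, hcorner, hy, isPreconnected_baseSeg⟩
  · exact hteeth _ (hy.1 ▸ hy1) (fun v hv => Or.inl (Or.inr hv)) y hy
  · exact hteeth _ (hy.1 ▸ hy1) (fun v hv => Or.inr ⟨k, hk, hv⟩) y hy

theorem isPreconnected_Ek (hr : 0 ≤ r) (k : ℤ) : IsPreconnected (Ek r k) :=
  (isPreconnected_Eset hr).image _ (continuous_const_smul _).continuousOn

theorem isConnected_Wtilde (hr : 0 ≤ r) : IsConnected (Wtilde r) := by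
  have haxis : axisLine ⊆ Wtilde r := fun v hv => Or.inr hv.2
  refine ⟨⟨0, Or.inr ⟨rfl, rfl⟩⟩, isPreconnected_of_forall 0 fun y hy => ?_⟩
  rcases hy with hy | hy
  · obtain ⟨k, hk⟩ := mem_iUnion.1 hy
    have hfoot : T2pow k (3 / 2, 0, 0) ∈ Ek r k ∩ axisLine :=
      ⟨⟨_, Or.inl (Or.inl ⟨⟨by linarith, by linarith⟩, rfl, rfl⟩), rfl⟩,
        trivial, by simp [T2pow], by simp [T2pow]⟩
    refine ⟨Ek r k ∪ axisLine, union_subset (fun v hv => Or.inl (mem_iUnion_of_mem k hv))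
      haxis, Or.inr ⟨trivial, rfl, rfl⟩, Or.inl hk, ?_⟩
    exact (isPreconnected_Ek hr k).union _ hfoot.1 hfoot.2 isPreconnected_axisLine
  · exact ⟨axisLine, haxis, ⟨trivial, rfl, rfl⟩, ⟨trivial, hy⟩,
      isPreconnected_axisLine⟩

def toothWindow (r : ℝ) : Set (ℝ × ℝ × ℝ) :=
  {v | |v.1 - (3 / 2 - r / 2)| < r / 4 ∧ r / 4 < v.2.1}

theorem isOpen_toothWindow : IsOpen (toothWindow r) := by
  unfold toothWindow
  exact (isOpen_lt (continuous_abs.comp (continuous_fst.sub continuous_const))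
    continuous_const).inter
    (isOpen_lt continuous_const (continuous_fst.comp continuous_snd))

theorem two_zpow_neg_le_half_or_two_le {k : ℤ} (hk : k ≠ 0) :
    (2 : ℝ) ^ (-k) ≤ 1 / 2 ∨ 2 ≤ (2 : ℝ) ^ (-k) := by
  rcases lt_or_gt_of_ne hk with hk | hk
  · right
    simpa using zpow_le_zpow_right₀ (a := (2 : ℝ)) one_le_two (by omega : 1 ≤ -k)
  · left
    simpa using zpow_le_zpow_right₀ (a := (2 : ℝ)) one_le_two (by omega : -k ≤ -1)

/-- Shrinking by `T₂` pushes the teeth below height `r / 4`; expanding pushes `E` beyond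
`x = 3 - r`. -/
theorem disjoint_Ek_toothWindow (hr : r ∈ Ioo (0 : ℝ) (1 / 2)) {k : ℤ} (hk : k ≠ 0) :
    Disjoint (Ek r k) (toothWindow r) := by
  obtain ⟨hr0, hr1⟩ := hr
  rw [disjoint_left]
  rintro _ ⟨u, hu, rfl⟩ ⟨hx, hy⟩
  obtain ⟨⟨hu1, hu1'⟩, ⟨hu2, hu2'⟩, -⟩ := Eset_subset hr0.le hu
  simp only [T2pow, Prod.smul_fst, Prod.smul_snd, smul_eq_mul] at hx hy
  have hx' := (abs_lt.1 hx).2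
  rcases two_zpow_neg_le_half_or_two_le hk with hs | hs <;> nlinarith

theorem fst_mem_of_mem_Wtilde_inter_toothWindow (hr : r ∈ Ioo (0 : ℝ) (1 / 2)) {v : ℝ × ℝ × ℝ}
    (hv : v ∈ Wtilde r ∩ toothWindow r) :
    v.1 ∈ insert (3 / 2 - r / 2) (range fun k : ℕ => 3 / 2 - r / 2 + r / k) := by
  obtain ⟨hW | ⟨hy0, -⟩, hwin⟩ := hv
  · obtain ⟨k, hk⟩ := mem_iUnion.1 hW
    obtain rfl : k = 0 := by
      by_contra hk0
      exact disjoint_left.1 (disjoint_Ek_toothWindow hr hk0) hk hwin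
    obtain ⟨u, hu, rfl⟩ := hk
    simp only [T2pow, neg_zero, zpow_zero, one_smul] at hwin ⊢
    rcases hu with (⟨-, hy0, -⟩ | ⟨hx, -⟩) | ⟨k, -, hx, -⟩
    · linarith [hwin.2, hr.1]
    · exact Or.inl hx
    · exact Or.inr ⟨k, hx.symm⟩
  · linarith [hwin.2, hr.1]

theorem not_locallyConnectedSpace_Wtilde (hr : r ∈ Ioo (0 : ℝ) (1 / 2)) :
    ¬ LocallyConnectedSpace (Wtilde r) := by
  intro _
  have hEW : Eset r ⊆ Wtilde r := fun v hv =>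
    Or.inl (mem_iUnion_of_mem 0 ⟨v, hv, by simp [T2pow]⟩)
  let p : Wtilde r := ⟨(3 / 2 - r / 2, r / 2, 0), hEW (Or.inl (Or.inr
    ⟨rfl, ⟨by linarith [hr.1], le_rfl⟩, rfl⟩))⟩
  let q (n : ℕ) : Wtilde r := ⟨(3 / 2 - r / 2 + r / (n + 1 : ℕ), r / 2, 0), hEW (Or.inr
    ⟨n + 1, by omega, rfl, ⟨by linarith [hr.1], le_rfl⟩, rfl⟩)⟩
  have hq : Tendsto q atTop (𝓝 p) := by
    refine tendsto_subtype_rng.2 (Tendsto.prodMk_nhds ?_ tendsto_const_nhds)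
    simpa using ((tendsto_const_div_atTop_nhds_zero_nat r).comp
      (tendsto_add_atTop_nat 1)).const_add (3 / 2 - r / 2)
  have hwindow : Subtype.val ⁻¹' toothWindow r ∈ 𝓝 p :=
    (isOpen_toothWindow.preimage continuous_subtype_val).mem_nhds
      (show toothWindow r (3 / 2 - r / 2, r / 2, 0) from
        ⟨by simp [hr.1], by linarith [hr.1]⟩)
  have hcount : ((fun v : Wtilde r => v.1.1) '' (Subtype.val ⁻¹' toothWindow r)).Countable := by
    refine ((countable_range fun k : ℕ => 3 / 2 - r / 2 + r / k).insert
      (3 / 2 - r / 2)).mono ?_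
    rintro _ ⟨v, hv, rfl⟩
    exact fst_mem_of_mem_Wtilde_inter_toothWindow hr ⟨v.2, hv⟩
  obtain ⟨n, hn⟩ := (hq.eventually
    (eventually_eq_of_countable_image (by fun_prop) hwindow hcount)).exists
  have : 0 < r / (n + 1 : ℕ) := div_pos hr.1 (by positivity)
  simp only [q, p] at hn
  linarith

end Comb

/-- The set `W̃ = ⋃_{k ∈ ℤ} E_k ∪ {(x,0,0) : x ∈ ℝ}` is connected but not
locally connected. -/
theorem stmt_18 (r : ℝ) (hr : r ∈ Ioo (0 : ℝ) (1 / 2)) :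
    IsConnected (Wtilde r) ∧ ¬ LocallyConnectedSpace ↥(Wtilde r) :=
  ⟨isConnected_Wtilde hr.1.le, not_locallyConnectedSpace_Wtilde hr⟩
end
end

section
/- (Remark) The time-one map φ₁ of the flow of X is not continuously differentiable: φ₁ is not C¹ on ℝ³. (Indeed, at every point (x₀,0,0) with x₀ lying on one of the vertical segments of some E_k, the partial derivative of φ₁ in the direction (0,1,0), computed from the side y ≥ 0, equals (0,1/4,0), while along points (0,y,0) the map φ₁ is the identity, so the derivative of φ₁ cannot be continuous at the origin.) -/
noncomputable section

open Set Filter Topology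

/-- Remark: the time-one map `φ₁` of the flow of `X` is not `C¹` on `ℝ³`. -/
theorem stmt_19 (r : ℝ) (hr : r ∈ Ioo (0 : ℝ) (1 / 2))
    (ρ : ℝ × ℝ × ℝ → ℝ) (hρs : ContDiff ℝ (⊤ : ℕ∞) ρ) (hρ01 : ∀ v, ρ v ∈ Icc (0 : ℝ) 1)
    (hρE : ρ ⁻¹' {1} = Eset r) (hρ0 : ∀ v ∉ interior (Bset r), ρ v = 0)
    (X : ℝ × ℝ × ℝ → ℝ × ℝ × ℝ)
    (hX : ∀ n : ℤ, ∀ v ∈ Bn r n, X v = (0, -(ρ (T2pow (-n) v) * v.2.1 * Real.log 4), 0))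
    (hX0 : ∀ v : ℝ × ℝ × ℝ, (∀ n : ℤ, v ∉ Bn r n) → X v = 0)
    (φ : ℝ → ℝ × ℝ × ℝ → ℝ × ℝ × ℝ)
    (hφ0 : ∀ v, φ 0 v = v)
    (hφd : ∀ (v : ℝ × ℝ × ℝ) (t : ℝ), HasDerivAt (fun s => φ s v) (X (φ t v)) t) :
    ¬ ContDiff ℝ 1 (φ 1) := by
  obtain ⟨hr0, hr2⟩ := hr
  intro hC
  have hlog : (0:ℝ) < Real.log 4 := Real.log_pos (by norm_num)
  -- derivative of components
  have dfst : ∀ {F : ℝ → ℝ × ℝ × ℝ} {F' : ℝ × ℝ × ℝ} {t : ℝ}, HasDerivAt F F' t →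
      HasDerivAt (fun s => (F s).1) F'.1 t := by
    intro F F' t h
    exact (ContinuousLinearMap.fst ℝ ℝ (ℝ × ℝ)).hasFDerivAt.comp_hasDerivAt t h
  have dsnd1 : ∀ {F : ℝ → ℝ × ℝ × ℝ} {F' : ℝ × ℝ × ℝ} {t : ℝ}, HasDerivAt F F' t →
      HasDerivAt (fun s => (F s).2.1) F'.2.1 t := by
    intro F F' t h
    exact ((ContinuousLinearMap.fst ℝ ℝ ℝ).comp
      (ContinuousLinearMap.snd ℝ ℝ (ℝ × ℝ))).hasFDerivAt.comp_hasDerivAt t h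
  have dsnd2 : ∀ {F : ℝ → ℝ × ℝ × ℝ} {F' : ℝ × ℝ × ℝ} {t : ℝ}, HasDerivAt F F' t →
      HasDerivAt (fun s => (F s).2.2) F'.2.2 t := by
    intro F F' t h
    exact ((ContinuousLinearMap.snd ℝ ℝ ℝ).comp
      (ContinuousLinearMap.snd ℝ ℝ (ℝ × ℝ))).hasFDerivAt.comp_hasDerivAt t h
  -- structure of X
  have hXs : ∀ w : ℝ × ℝ × ℝ, ∃ c : ℝ, 0 ≤ c ∧ c ≤ Real.log 4 ∧
      X w = (0, -(c * w.2.1), 0) := by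
    intro w
    by_cases h : ∃ n : ℤ, w ∈ Bn r n
    · obtain ⟨n, hn⟩ := h
      refine ⟨ρ (T2pow (-n) w) * Real.log 4,
        mul_nonneg (hρ01 _).1 hlog.le,
        mul_le_of_le_one_left hlog.le (hρ01 _).2, ?_⟩
      rw [hX n w hn]
      refine Prod.ext rfl (Prod.ext ?_ rfl)
      show -(ρ (T2pow (-n) w) * w.2.1 * Real.log 4) = -(ρ (T2pow (-n) w) * Real.log 4 * w.2.1)
      ring
    · push_neg at h
      refine ⟨0, le_rfl, hlog.le, ?_⟩
      rw [hX0 w h]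
      norm_num
      rfl
  -- first and third coordinates constant along the flow
  have hc1 : ∀ (v : ℝ × ℝ × ℝ) (t : ℝ), (φ t v).1 = v.1 := by
    intro v t
    have hd : ∀ s : ℝ, HasDerivAt (fun u => (φ u v).1) 0 s := by
      intro s
      have h := dfst (hφd v s)
      obtain ⟨c, _, _, hc⟩ := hXs (φ s v)
      rw [hc] at h
      exact h
    have := is_const_of_deriv_eq_zero (fun s => (hd s).differentiableAt)
      (fun s => (hd s).deriv) t 0
    rw [this, hφ0]
  have hc3 : ∀ (v : ℝ × ℝ × ℝ) (t : ℝ), (φ t v).2.2 = v.2.2 := by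
    intro v t
    have hd : ∀ s : ℝ, HasDerivAt (fun u => (φ u v).2.2) 0 s := by
      intro s
      have h := dsnd2 (hφd v s)
      obtain ⟨c, _, _, hc⟩ := hXs (φ s v)
      rw [hc] at h
      exact h
    have := is_const_of_deriv_eq_zero (fun s => (hd s).differentiableAt)
      (fun s => (hd s).deriv) t 0
    rw [this, hφ0]
  have hφeq : ∀ (v : ℝ × ℝ × ℝ) (t : ℝ), φ t v = (v.1, (φ t v).2.1, v.2.2) := by
    intro v t
    exact Prod.ext (hc1 v t) (Prod.ext rfl (hc3 v t))
  -- key a priori bounds on the y coordinate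
  have key : ∀ v : ℝ × ℝ × ℝ, 0 ≤ v.2.1 → ∀ t : ℝ, 0 ≤ t →
      0 ≤ (φ t v).2.1 ∧ (φ t v).2.1 ≤ v.2.1 ∧ (0 < v.2.1 → 0 < (φ t v).2.1) := by
    intro v hy t ht
    set g : ℝ → ℝ := fun u => (φ u v).2.1 with hgdef
    have hg : ∀ s : ℝ, HasDerivAt g ((X (φ s v)).2.1) s := fun s => dsnd1 (hφd v s)
    have hg0 : g 0 = v.2.1 := by rw [hgdef]; simp [hφ0]
    have hh : ∀ s : ℝ, HasDerivAt (fun u => g u * g u)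
        ((X (φ s v)).2.1 * g s + g s * (X (φ s v)).2.1) s := fun s => (hg s).mul (hg s)
    have hanti : Antitone (fun u => g u * g u) := by
      refine antitone_of_deriv_nonpos (fun s => ((hh s).differentiableAt)) (fun s => ?_)
      rw [(hh s).deriv]
      obtain ⟨c, hc0, _, hc⟩ := hXs (φ s v)
      have hX1 : (X (φ s v)).2.1 = -(c * g s) := by rw [hc]
      rw [hX1]
      nlinarith [sq_nonneg (g s), mul_nonneg hc0 (mul_self_nonneg (g s))]
    have hk : ∀ s : ℝ, HasDerivAt (fun u => g u * g u * Real.exp (2 * Real.log 4 * u))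
        (((X (φ s v)).2.1 * g s + g s * (X (φ s v)).2.1) * Real.exp (2 * Real.log 4 * s)
          + g s * g s * (Real.exp (2 * Real.log 4 * s) * (2 * Real.log 4))) s := by
      intro s
      have hl : HasDerivAt (fun u : ℝ => 2 * Real.log 4 * u) (2 * Real.log 4) s := by
        simpa using (hasDerivAt_id s).const_mul (2 * Real.log 4)
      exact (hh s).mul ((Real.hasDerivAt_exp _).comp s hl)
    have hmono : Monotone (fun u => g u * g u * Real.exp (2 * Real.log 4 * u)) := by
      refine monotone_of_deriv_nonneg (fun s => ((hk s).differentiableAt)) (fun s => ?_)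
      rw [(hk s).deriv]
      obtain ⟨c, hc0, hcL, hc⟩ := hXs (φ s v)
      have hX1 : (X (φ s v)).2.1 = -(c * g s) := by rw [hc]
      rw [hX1]
      have hep := Real.exp_pos (2 * Real.log 4 * s)
      nlinarith [mul_self_nonneg (g s), mul_nonneg (mul_nonneg hc0 (mul_self_nonneg (g s))) hep.le,
        mul_nonneg (mul_nonneg (sub_nonneg.2 hcL) (mul_self_nonneg (g s))) hep.le]
    have hub : g t * g t ≤ v.2.1 * v.2.1 := by
      have h := hanti ht
      simp only at h
      rw [hg0] at h
      exact h
    have hlb : v.2.1 * v.2.1 ≤ g t * g t * Real.exp (2 * Real.log 4 * t) := by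
      have h := hmono ht
      simp only at h
      rw [hg0] at h
      simpa using h
    rcases eq_or_lt_of_le hy with hy0 | hy0
    · have hgt0 : g t = 0 := by nlinarith [mul_self_nonneg (g t)]
      refine ⟨le_of_eq hgt0.symm, ?_, fun h => absurd h (by rw [← hy0]; exact lt_irrefl 0)⟩
      rw [← hy0]
      exact le_of_eq hgt0
    · have hpos : 0 < g t := by
        by_contra hle
        push_neg at hle
        have hgc : ContinuousOn g (Icc 0 t) := fun s _ => ((hg s).continuousAt).continuousWithinAt
        have hmem : (0:ℝ) ∈ Icc (g t) (g 0) := ⟨hle, by rw [hg0]; exact hy0.le⟩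
        obtain ⟨s, hs, hgs⟩ := intermediate_value_Icc' ht hgc hmem
        have h1 := hmono hs.1
        simp only at h1
        rw [hg0, hgs] at h1
        simp only [mul_zero, zero_mul, Real.exp_zero, mul_one] at h1
        nlinarith
      exact ⟨hpos.le, by nlinarith, fun _ => hpos⟩
  -- φ 1 fixes the plane y = 0
  have hfix : ∀ w : ℝ × ℝ × ℝ, w.2.1 = 0 → φ 1 w = w := by
    intro w hw
    obtain ⟨h1, h2, _⟩ := key w (le_of_eq hw.symm) 1 (by norm_num)
    rw [hw] at h2
    have h3 : (φ 1 w).2.1 = w.2.1 := by rw [hw]; linarith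
    rw [hφeq w 1, h3]
  -- points with first coordinate 0 are in no Bn
  have hax : ∀ w : ℝ × ℝ × ℝ, w.1 = 0 → ∀ n : ℤ, w ∉ Bn r n := by
    intro w hw n hmem
    obtain ⟨u, hu, huw⟩ := hmem
    have h1 : (2:ℝ)^(-n) * u.1 = w.1 := by rw [← huw]; rfl
    have h2 : ((2:ℝ)^(-n)) ≠ 0 := by positivity
    rw [hw] at h1
    have hu1 : u.1 = 0 := (mul_eq_zero.1 h1).resolve_left h2
    simp only [Bset, mem_setOf_eq] at hu
    rw [hu1] at hu
    nlinarith [sq_nonneg u.2.1, sq_nonneg u.2.2]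
  -- the time-one map fixes the y-axis
  have haxis : ∀ y : ℝ, φ 1 ((0, y, 0) : ℝ × ℝ × ℝ) = (0, y, 0) := by
    intro y
    set v : ℝ × ℝ × ℝ := (0, y, 0) with hv
    have hXz : ∀ s : ℝ, X (φ s v) = 0 := by
      intro s
      exact hX0 _ (hax _ (by rw [hc1 v s]))
    have hd : ∀ s : ℝ, HasDerivAt (fun u => (φ u v).2.1) 0 s := by
      intro s
      have h := dsnd1 (hφd v s)
      rw [hXz s] at h
      simpa using h
    have hgc : (φ 1 v).2.1 = v.2.1 := by
      have := is_const_of_deriv_eq_zero (fun s => (hd s).differentiableAt)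
        (fun s => (hd s).deriv) 1 0
      rw [this, hφ0]
    rw [hφeq v 1, hgc]
  -- the time-one map on the scaled vertical segments
  have hseg : ∀ (m : ℕ) (y : ℝ), 0 < y → (2:ℝ)^(m:ℤ) * y ≤ r / 2 →
      φ 1 (((2:ℝ)^(-(m:ℤ)) * (3/2 - r/2), y, 0) : ℝ × ℝ × ℝ)
        = ((2:ℝ)^(-(m:ℤ)) * (3/2 - r/2), y/4, 0) := by
    intro m y hy hym
    set v : ℝ × ℝ × ℝ := ((2:ℝ)^(-(m:ℤ)) * (3/2 - r/2), y, 0) with hv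
    set g : ℝ → ℝ := fun u => (φ u v).2.1 with hgdef
    have hg0 : g 0 = y := by rw [hgdef]; simp [hφ0]; rfl
    have hgd : ∀ s : ℝ, HasDerivAt g ((X (φ s v)).2.1) s := fun s => dsnd1 (hφd v s)
    have hpowinv : (2:ℝ)^(-(m:ℤ)) * (2:ℝ)^((m:ℤ)) = 1 := by
      rw [← zpow_add₀ (two_ne_zero : (2:ℝ) ≠ 0)]
      norm_num
    have h2m : (0:ℝ) < (2:ℝ)^((m:ℤ)) := by positivity
    have hode : ∀ t : ℝ, 0 ≤ t → HasDerivAt g (-(g t * Real.log 4)) t := by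
      intro t ht
      obtain ⟨hpos0, hle0, hpos⟩ := key v hy.le t ht
      have hgpos : 0 < g t := hpos hy
      have hgle : g t ≤ y := hle0
      have hub2 : (2:ℝ)^((m:ℤ)) * g t ≤ r / 2 := by nlinarith
      have hmem : φ t v ∈ Bn r (m:ℤ) := by
        refine ⟨((3/2 - r/2 : ℝ), (2:ℝ)^((m:ℤ)) * g t, (0:ℝ)), ?_, ?_⟩
        · simp only [Bset, mem_setOf_eq]
          nlinarith [mul_pos h2m hgpos]
        · rw [hφeq v t]
          show ((2:ℝ)^(-(m:ℤ)) * (3/2 - r/2), (2:ℝ)^(-(m:ℤ)) * ((2:ℝ)^((m:ℤ)) * g t),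
            (2:ℝ)^(-(m:ℤ)) * 0) = (v.1, (φ t v).2.1, v.2.2)
          rw [← mul_assoc, hpowinv, one_mul, mul_zero]
      have hTm : T2pow (-(m:ℤ)) (φ t v) = ((3/2 - r/2 : ℝ), (2:ℝ)^((m:ℤ)) * g t, (0:ℝ)) := by
        rw [hφeq v t]
        show ((2:ℝ)^(-(-(m:ℤ))) * v.1, (2:ℝ)^(-(-(m:ℤ))) * (φ t v).2.1,
          (2:ℝ)^(-(-(m:ℤ))) * v.2.2) = _
        rw [neg_neg]
        refine Prod.ext ?_ (Prod.ext rfl ?_)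
        · show (2:ℝ)^((m:ℤ)) * ((2:ℝ)^(-(m:ℤ)) * (3/2 - r/2)) = 3/2 - r/2
          rw [← mul_assoc, mul_comm ((2:ℝ)^((m:ℤ))), hpowinv, one_mul]
        · show (2:ℝ)^((m:ℤ)) * (0:ℝ) = 0
          rw [mul_zero]
      have hρ1 : ρ (T2pow (-(m:ℤ)) (φ t v)) = 1 := by
        rw [hTm]
        have hmemE : (((3/2 - r/2 : ℝ), (2:ℝ)^((m:ℤ)) * g t, (0:ℝ)) : ℝ × ℝ × ℝ) ∈ Eset r := by
          apply mem_union_left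
          apply mem_union_right
          exact ⟨rfl, ⟨by positivity, hub2⟩, rfl⟩
        rw [← hρE] at hmemE
        exact hmemE
      have h := hgd t
      rw [hX (m:ℤ) (φ t v) hmem] at h
      simp only at h
      rw [hρ1] at h
      have heq : -(1 * (φ t v).2.1 * Real.log 4) = -(g t * Real.log 4) := by
        rw [one_mul]
      rw [heq] at h
      exact h
    -- g t * exp(log 4 * t) is constant on [0,1]
    have hcont : ContinuousOn (fun u => g u * Real.exp (Real.log 4 * u)) (Icc 0 1) := by
      intro s _
      exact (((hgd s).continuousAt).mul
        ((Real.continuous_exp.comp (continuous_const.mul continuous_id)).continuousAt)).continuousWithinAt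
    have hderiv0 : ∀ t ∈ Ico (0:ℝ) 1,
        HasDerivWithinAt (fun u => g u * Real.exp (Real.log 4 * u)) 0 (Ici t) t := by
      intro t ht
      have hl : HasDerivAt (fun u : ℝ => Real.log 4 * u) (Real.log 4) t := by
        simpa using (hasDerivAt_id t).const_mul (Real.log 4)
      have hexp := (Real.hasDerivAt_exp _).comp t hl
      have hmul := (hode t ht.1).mul hexp
      simp only [Function.comp] at hmul
      have h0 : -(g t * Real.log 4) * Real.exp (Real.log 4 * t)
          + g t * (Real.exp (Real.log 4 * t) * Real.log 4) = 0 := by ring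
      rw [h0] at hmul
      exact hmul.hasDerivWithinAt
    have hconst := constant_of_has_deriv_right_zero hcont hderiv0 1
      (by norm_num : (1:ℝ) ∈ Icc (0:ℝ) 1)
    rw [hg0, mul_zero, Real.exp_zero, mul_one, mul_one, Real.exp_log (by norm_num : (0:ℝ) < 4)]
      at hconst
    have hg1 : g 1 = y / 4 := by linarith
    rw [hφeq v 1]
    refine Prod.ext rfl (Prod.ext ?_ rfl)
    exact hg1
  -- now the derivative argument
  have hdiff : Differentiable ℝ (φ 1) := hC.differentiable one_ne_zero
  have hcontf : Continuous fun p => fderiv ℝ (φ 1) p := hC.continuous_fderiv one_ne_zero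
  set e : ℝ × ℝ × ℝ := (0, 1, 0) with he
  have hline : ∀ p : ℝ × ℝ × ℝ, HasDerivAt (fun y : ℝ => (φ 1 (p + y • e)).2.1)
      ((fderiv ℝ (φ 1) p e).2.1) 0 := by
    intro p
    have hsm : HasDerivAt (fun y : ℝ => p + y • e) e 0 := by
      simpa using ((hasDerivAt_id (0:ℝ)).smul_const e).const_add p
    have hF : HasFDerivAt (φ 1) (fderiv ℝ (φ 1) p) ((fun y : ℝ => p + y • e) 0) := by
      have : (fun y : ℝ => p + y • e) 0 = p := by simp
      rw [this]
      exact (hdiff p).hasFDerivAt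
    exact dsnd1 (hF.comp_hasDerivAt 0 hsm)
  have hL0 : ((fderiv ℝ (φ 1) 0 e).2.1) = 1 := by
    have h := hline 0
    have hfun : (fun y : ℝ => (φ 1 ((0:ℝ×ℝ×ℝ) + y • e)).2.1) = fun y => y := by
      funext y
      have h1 : (0:ℝ×ℝ×ℝ) + y • e = ((0, y, 0) : ℝ × ℝ × ℝ) := by
        rw [he]
        refine Prod.ext ?_ (Prod.ext ?_ ?_) <;> simp
      rw [h1, haxis y]
    rw [hfun] at h
    exact (h.unique (hasDerivAt_id 0))
  have hLm : ∀ m : ℕ,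
      ((fderiv ℝ (φ 1) (((2:ℝ)^(-(m:ℤ)) * (3/2 - r/2), 0, 0) : ℝ × ℝ × ℝ) e).2.1) = 1/4 := by
    intro m
    set q : ℝ × ℝ × ℝ := ((2:ℝ)^(-(m:ℤ)) * (3/2 - r/2), 0, 0) with hq
    have h := (hline q).hasDerivWithinAt (s := Ici (0:ℝ))
    set δ : ℝ := (2:ℝ)^(-(m:ℤ)) * (r/2) with hδ
    have hδ0 : 0 < δ := by positivity
    have hqe : ∀ y : ℝ, q + y • e = (((2:ℝ)^(-(m:ℤ)) * (3/2 - r/2), y, 0) : ℝ × ℝ × ℝ) := by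
      intro y
      rw [hq, he]
      refine Prod.ext ?_ (Prod.ext ?_ ?_) <;> simp
    have hev : (fun y : ℝ => y / 4) =ᶠ[𝓝[Ici (0:ℝ)] 0]
        (fun y : ℝ => (φ 1 (q + y • e)).2.1) := by
      filter_upwards [Ico_mem_nhdsGE_of_mem (⟨le_rfl, hδ0⟩ : (0:ℝ) ∈ Ico 0 δ)] with y hy
      rcases eq_or_lt_of_le hy.1 with h0 | h0
      · rw [hqe, ← h0, hfix _ rfl]
        norm_num
      · have hy2 : (2:ℝ)^((m:ℤ)) * y ≤ r / 2 := by
          have h2m : (0:ℝ) < (2:ℝ)^((m:ℤ)) := by positivity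
          have hlt := hy.2
          have hpowinv : (2:ℝ)^((m:ℤ)) * (2:ℝ)^(-(m:ℤ)) = 1 := by
            rw [← zpow_add₀ (two_ne_zero : (2:ℝ) ≠ 0)]
            norm_num
          have : (2:ℝ)^((m:ℤ)) * δ = r / 2 := by
            rw [hδ, ← mul_assoc, hpowinv, one_mul]
          nlinarith
        rw [hqe, hseg m y h0 hy2]
    have hx0 : (fun y : ℝ => y / 4) 0 = (φ 1 (q + (0:ℝ) • e)).2.1 := by
      rw [hqe, hfix _ rfl]
      norm_num
    have h2 := h.congr_of_eventuallyEq hev hx0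
    have h3 : HasDerivWithinAt (fun y : ℝ => y / 4) ((1:ℝ)/4) (Ici (0:ℝ)) 0 := by
      simpa using ((hasDerivAt_id (0:ℝ)).div_const 4).hasDerivWithinAt
    have hu : UniqueDiffWithinAt ℝ (Ici (0:ℝ)) 0 := uniqueDiffOn_Ici 0 0 Set.self_mem_Ici
    have e1 := h2.derivWithin hu
    have e2 := h3.derivWithin hu
    rw [e2] at e1
    exact e1.symm
  -- take the limit
  have hq0 : Tendsto (fun m : ℕ => (((2:ℝ)^(-(m:ℤ)) * (3/2 - r/2), 0, 0) : ℝ × ℝ × ℝ))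
      atTop (𝓝 0) := by
    have h1 : Tendsto (fun m : ℕ => (2:ℝ)^(-(m:ℤ)) * (3/2 - r/2)) atTop (𝓝 0) := by
      have heq : (fun m : ℕ => (2:ℝ)^(-(m:ℤ)) * (3/2 - r/2))
          = fun m : ℕ => (1/2:ℝ)^m * (3/2 - r/2) := by
        funext m
        congr 1
        rw [zpow_neg, zpow_natCast, ← inv_pow, one_div]
      rw [heq]
      have := (tendsto_pow_atTop_nhds_zero_of_lt_one (by norm_num : (0:ℝ) ≤ 1/2)
        (by norm_num : (1/2:ℝ) < 1)).mul_const (3/2 - r/2)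
      simpa using this
    have h0 : (0 : ℝ × ℝ × ℝ) = ((0:ℝ), (0:ℝ), (0:ℝ)) := rfl
    rw [h0]
    exact h1.prodMk_nhds (tendsto_const_nhds.prodMk_nhds tendsto_const_nhds)
  have hFcont : Continuous fun p : ℝ × ℝ × ℝ => ((fderiv ℝ (φ 1) p) e).2.1 := by
    have h1 : Continuous fun p : ℝ × ℝ × ℝ => (fderiv ℝ (φ 1) p) e :=
      hcontf.clm_apply continuous_const
    exact continuous_fst.comp (continuous_snd.comp h1)
  have hlim : Tendsto (fun m : ℕ =>
      ((fderiv ℝ (φ 1) (((2:ℝ)^(-(m:ℤ)) * (3/2 - r/2), 0, 0) : ℝ × ℝ × ℝ) e).2.1))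
      atTop (𝓝 1) := by
    have := (hFcont.tendsto 0).comp hq0
    rw [hL0] at this
    exact this
  have hlim2 : Tendsto (fun _ : ℕ => (1/4 : ℝ)) atTop (𝓝 1) := by
    have heq : (fun m : ℕ =>
        ((fderiv ℝ (φ 1) (((2:ℝ)^(-(m:ℤ)) * (3/2 - r/2), 0, 0) : ℝ × ℝ × ℝ) e).2.1))
        = fun _ : ℕ => (1/4 : ℝ) := funext fun m => hLm m
    rw [← heq]
    exact hlim
  have := tendsto_nhds_unique hlim2 tendsto_const_nhds
  norm_num at this
end
end
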